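/- arXiv:2502.13906 — 2 statements merged into one kernel-verified Lean document; each statement's English description precedes it below -/
import Mathlib

section
/- Pohozaev identity for the Liouville system: Let B = (b_{ij}) be a real symmetric positive definite 2×2 matrix with positive entries, and let (Γ₁, Γ₂) be a radial Liouville pair for B with decay rates m₁, m₂ > 2. Set σ_l := (1/(2π))∫_{ℝ²} e^{Γ_l(y)} dy for l = 1,2. Then 4(σ₁ + σ₂) = b₁₁σ₁² + 2b₁₂σ₁σ₂ + b₂₂σ₂². -/
open MeasureTheory Real

noncomputable section

/-- The Euclidean plane. -/
abbrev E2 : Type := EuclideanSpace ℝ (Fin 2)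

/-- The `i`-th partial derivative of `f : ℝ² → ℝ`. -/
noncomputable def pd (i : Fin 2) (f : E2 → ℝ) (y : E2) : ℝ :=
  fderiv ℝ f y (EuclideanSpace.single i 1)

/-- The Laplacian on `ℝ²`. -/
noncomputable def lap (f : E2 → ℝ) (y : E2) : ℝ :=
  pd 0 (pd 0 f) y + pd 1 (pd 1 f) y

/-- The divergence `div (U ∇ g)` on `ℝ²`. -/
noncomputable def divUgrad (U g : E2 → ℝ) (y : E2) : ℝ :=
  pd 0 (fun z => U z * pd 0 g z) y + pd 1 (fun z => U z * pd 1 g z) y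

/-- A radial Liouville pair for the matrix `b`, with decay rates `m 0, m 1 > 2`:
smooth radially symmetric solutions of the Liouville system
`ΔΓⱼ + b_{j1} e^{Γ₁} + b_{j2} e^{Γ₂} = 0` with `Γⱼ(y) = −mⱼ log|y| + O(1)`. -/
structure RadialLiouvillePair (b : Fin 2 → Fin 2 → ℝ) (Γ : Fin 2 → E2 → ℝ)
    (m : Fin 2 → ℝ) : Prop where
  smooth : ∀ j, ContDiff ℝ (⊤ : ℕ∞) (Γ j)
  radial : ∀ j, ∃ γ : ℝ → ℝ, ∀ y : E2, Γ j y = γ ‖y‖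
  system : ∀ (j : Fin 2) (y : E2),
    lap (Γ j) y + b j 0 * Real.exp (Γ 0 y) + b j 1 * Real.exp (Γ 1 y) = 0
  m_gt_two : ∀ j, 2 < m j
  decay : ∃ C₀ > 0, ∀ (j : Fin 2) (y : E2), 1 ≤ ‖y‖ →
    |Γ j y + m j * Real.log ‖y‖| ≤ C₀

/-- `b` is a real symmetric positive definite 2×2 matrix with positive entries. -/
def SymmPosDefPos (b : Fin 2 → Fin 2 → ℝ) : Prop :=
  (∀ i j, b i j = b j i) ∧ (∀ i j, 0 < b i j) ∧
  (∀ v : Fin 2 → ℝ, v ≠ 0 → 0 < ∑ i, ∑ j, b i j * v i * v j)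

/-! ### Auxiliary material for the proof -/

open Filter Set Topology

/-- The first basis vector of `ℝ²`. -/
def e₀ : E2 := EuclideanSpace.single 0 1
/-- The second basis vector of `ℝ²`. -/
def e₁ : E2 := EuclideanSpace.single 1 1

/-- The radial profile of a function on `ℝ²`. -/
noncomputable def rad (f : E2 → ℝ) : ℝ → ℝ := fun r => f (r • e₀)

lemma norm_eq_sqrt (z : E2) : ‖z‖ = Real.sqrt ((z 0)^2 + (z 1)^2) := by
  rw [EuclideanSpace.norm_eq]; simp [Fin.sum_univ_two, sq_abs]

lemma cd_deriv {γ : ℝ → ℝ} (hγ : ContDiff ℝ (⊤:ℕ∞) γ) : ContDiff ℝ (⊤:ℕ∞) (deriv γ) := by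
  have : ContDiff ℝ (⊤:ℕ∞) (deriv^[1] γ) := ContDiff.iterate_deriv 1 (by exact_mod_cast hγ)
  simpa using this

lemma cd_diff {γ : ℝ → ℝ} (hγ : ContDiff ℝ (⊤:ℕ∞) γ) (x : ℝ) : DifferentiableAt ℝ γ x :=
  (hγ.differentiable (by simp)) x

lemma pd_radial (γ : ℝ → ℝ) (hγ : ContDiff ℝ (⊤:ℕ∞) γ) {z : E2} (hz : z ≠ 0) (i : Fin 2) :
    pd i (fun y => γ ‖y‖) z = deriv γ ‖z‖ * (z i / ‖z‖) := by
  have hn : 0 < ‖z‖ := norm_pos_iff.mpr hz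
  have key : (fun y : E2 => γ ‖y‖) = fun y => γ (Real.sqrt ((y 0)^2 + (y 1)^2)) := by
    funext y; rw [norm_eq_sqrt]
  have h0 : HasFDerivAt (fun y : E2 => y 0) (EuclideanSpace.proj (0:Fin 2) : E2 →L[ℝ] ℝ) z :=
    (EuclideanSpace.proj (0:Fin 2) : E2 →L[ℝ] ℝ).hasFDerivAt
  have h1 : HasFDerivAt (fun y : E2 => y 1) (EuclideanSpace.proj (1:Fin 2) : E2 →L[ℝ] ℝ) z :=
    (EuclideanSpace.proj (1:Fin 2) : E2 →L[ℝ] ℝ).hasFDerivAt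
  have hq : HasFDerivAt (fun y : E2 => (y 0)^2 + (y 1)^2)
      ((2 * z 0) • (EuclideanSpace.proj (0:Fin 2) : E2 →L[ℝ] ℝ)
        + (2 * z 1) • (EuclideanSpace.proj (1:Fin 2) : E2 →L[ℝ] ℝ)) z := by
    have h00 := h0.mul h0
    have h11 := h1.mul h1
    have := h00.add h11
    have e : (fun y : E2 => y 0 * y 0 + y 1 * y 1) = fun y : E2 => (y 0)^2 + (y 1)^2 := by
      funext y; ring
    change HasFDerivAt (fun y : E2 => y 0 * y 0 + y 1 * y 1) _ z at this; rw [e] at this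
    refine this.congr_fderiv ?_
    rw [two_mul, two_mul, add_smul, add_smul]
  have hqz : (z 0)^2 + (z 1)^2 ≠ 0 := by
    intro h
    rw [norm_eq_sqrt, h] at hn
    simp at hn
  have hs : HasDerivAt Real.sqrt (1 / (2 * Real.sqrt ((z 0)^2 + (z 1)^2))) ((z 0)^2 + (z 1)^2) :=
    Real.hasDerivAt_sqrt hqz
  have hg : HasDerivAt γ (deriv γ (Real.sqrt ((z 0)^2 + (z 1)^2))) (Real.sqrt ((z 0)^2 + (z 1)^2)) :=
    (hγ.differentiable (by simp) _).hasDerivAt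
  have comp1 := hs.comp_hasFDerivAt z hq
  have comp2 := hg.comp_hasFDerivAt z comp1
  rw [key]
  have hd : fderiv ℝ (fun y : E2 => γ (Real.sqrt ((y 0)^2 + (y 1)^2))) z
      = (deriv γ (Real.sqrt ((z 0)^2 + (z 1)^2)) •
          (1 / (2 * Real.sqrt ((z 0)^2 + (z 1)^2))) •
            ((2 * z 0) • (EuclideanSpace.proj (0:Fin 2) : E2 →L[ℝ] ℝ)
              + (2 * z 1) • (EuclideanSpace.proj (1:Fin 2) : E2 →L[ℝ] ℝ))) := by
    exact comp2.fderiv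
  unfold pd
  rw [hd]
  have hproj : ∀ (j : Fin 2), (EuclideanSpace.proj (j:Fin 2) : E2 →L[ℝ] ℝ)
      (EuclideanSpace.single i 1) = if j = i then 1 else 0 := by
    intro j
    simp [EuclideanSpace.single_apply]
  simp only [ContinuousLinearMap.smul_apply, ContinuousLinearMap.add_apply, hproj,
    smul_eq_mul, ← norm_eq_sqrt]
  fin_cases i <;>
  · norm_num
    left
    rw [div_eq_inv_mul]
    ring_nf

lemma pd_contDiff (f : E2 → ℝ) (hf : ContDiff ℝ (⊤:ℕ∞) f) (i : Fin 2) :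
    ContDiff ℝ (⊤:ℕ∞) (pd i f) :=
  (hf.fderiv_right (by exact_mod_cast le_top)).clm_apply contDiff_const

lemma line_hasDerivAt (f : E2 → ℝ) (hf : ContDiff ℝ (⊤:ℕ∞) f) (t : ℝ) (v p : E2) :
    HasDerivAt (fun s : ℝ => f (p + s • v)) (fderiv ℝ f (p + t • v) v) t := by
  have h1 : HasFDerivAt f (fderiv ℝ f (p + t • v)) (p + t • v) :=
    (hf.differentiable (by simp) (p + t • v)).hasFDerivAt
  have h2 : HasDerivAt (fun s : ℝ => p + s • v) v t := by
    simpa using ((hasDerivAt_id t).smul_const v).const_add p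
  exact h1.comp_hasDerivAt t h2

lemma norm_e₀ : ‖e₀‖ = 1 := by simp [e₀, EuclideanSpace.norm_single]
lemma norm_smul_e₀ (r : ℝ) : ‖r • e₀‖ = |r| := by
  rw [norm_smul, norm_e₀, mul_one]; rfl

lemma radial_formula (f : E2 → ℝ) (hrad : ∃ g : ℝ → ℝ, ∀ y : E2, f y = g ‖y‖) :
    ∀ y : E2, f y = rad f ‖y‖ := by
  obtain ⟨g, hg⟩ := hrad
  intro y
  rw [hg y]
  unfold rad
  rw [hg (‖y‖ • e₀), norm_smul_e₀, abs_norm]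

lemma rad_even (f : E2 → ℝ) (hrad : ∃ g : ℝ → ℝ, ∀ y : E2, f y = g ‖y‖) (r : ℝ) :
    rad f (-r) = rad f r := by
  have h := radial_formula f hrad
  show f ((-r) • e₀) = f (r • e₀)
  rw [h ((-r) • e₀), h (r • e₀), norm_smul_e₀, norm_smul_e₀, abs_neg]

lemma rad_contDiff (f : E2 → ℝ) (hs : ContDiff ℝ (⊤:ℕ∞) f) : ContDiff ℝ (⊤:ℕ∞) (rad f) :=
  hs.comp (contDiff_id.smul contDiff_const)

lemma pd_formula (f : E2 → ℝ) (hs : ContDiff ℝ (⊤:ℕ∞) f)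
    (hrad : ∃ g : ℝ → ℝ, ∀ y : E2, f y = g ‖y‖) {z : E2} (hz : z ≠ 0) (i : Fin 2) :
    pd i f z = deriv (rad f) ‖z‖ * (z i / ‖z‖) := by
  have hthis : f = fun y => rad f ‖y‖ := funext (radial_formula f hrad)
  have h2 := pd_radial (rad f) (rad_contDiff f hs) hz i
  rw [← hthis] at h2
  exact h2

lemma coord_smul_e (t s : ℝ) :
    (t • e₀ + s • e₁) 0 = t ∧ (t • e₀ + s • e₁) 1 = s := by
  constructor <;> simp [e₀, e₁, EuclideanSpace.single_apply]

lemma smul_e₀_ne_zero {t : ℝ} (ht : t ≠ 0) : t • e₀ ≠ 0 := by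
  intro h
  apply ht
  have := congrArg (fun z : E2 => z 0) h
  simpa [e₀, EuclideanSpace.single_apply] using this

lemma pd00_at (f : E2 → ℝ) (hs : ContDiff ℝ (⊤:ℕ∞) f)
    (hrad : ∃ g : ℝ → ℝ, ∀ y : E2, f y = g ‖y‖) (t : ℝ) (ht : 0 < t) :
    pd 0 (pd 0 f) (t • e₀) = deriv (deriv (rad f)) t := by
  have hpd := pd_contDiff f hs 0
  have hline := line_hasDerivAt (pd 0 f) hpd t e₀ 0
  simp only [zero_add] at hline
  have hev : (fun s : ℝ => pd 0 f (s • e₀)) =ᶠ[nhds t] deriv (rad f) := by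
    filter_upwards [isOpen_Ioi.mem_nhds ht] with s hs'
    have hsne : s • e₀ ≠ 0 := smul_e₀_ne_zero (ne_of_gt hs')
    rw [pd_formula f hs hrad hsne 0, norm_smul_e₀, abs_of_pos hs']
    have hc : (s • e₀) 0 = s := by
      have := (coord_smul_e s 0).1
      simpa using this
    rw [hc, div_self (ne_of_gt hs'), mul_one]
  have h2 : HasDerivAt (deriv (rad f)) (fderiv ℝ (pd 0 f) (t • e₀) e₀) t :=
    hline.congr_of_eventuallyEq hev.symm
  have h3 : HasDerivAt (deriv (rad f)) (deriv (deriv (rad f)) t) t :=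
    (cd_diff (cd_deriv (rad_contDiff f hs)) t).hasDerivAt
  have huniq := h2.unique h3
  show fderiv ℝ (pd 0 f) (t • e₀) e₀ = _
  rw [huniq]

lemma pd11_at (f : E2 → ℝ) (hs : ContDiff ℝ (⊤:ℕ∞) f)
    (hrad : ∃ g : ℝ → ℝ, ∀ y : E2, f y = g ‖y‖) (t : ℝ) (ht : 0 < t) :
    pd 1 (pd 1 f) (t • e₀) = deriv (rad f) t / t := by
  have hpd := pd_contDiff f hs 1
  have hline := line_hasDerivAt (pd 1 f) hpd 0 e₁ (t • e₀)
  simp only [zero_smul, add_zero] at hline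
  set n : ℝ → ℝ := fun s => Real.sqrt (t^2 + s^2) with hn
  have hnpos : ∀ s, 0 < n s := by
    intro s
    apply Real.sqrt_pos.mpr
    positivity
  have hz : ∀ s : ℝ, t • e₀ + s • e₁ ≠ 0 := by
    intro s h
    have := congrArg (fun z : E2 => z 0) h
    simp only at this
    rw [(coord_smul_e t s).1] at this
    exact (ne_of_gt ht) this
  have hnorm : ∀ s : ℝ, ‖t • e₀ + s • e₁‖ = n s := by
    intro s
    rw [norm_eq_sqrt, (coord_smul_e t s).1, (coord_smul_e t s).2]
  have heq : (fun s : ℝ => pd 1 f (t • e₀ + s • e₁))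
      = fun s => s * (deriv (rad f) (n s) / n s) := by
    funext s
    rw [pd_formula f hs hrad (hz s) 1, hnorm, (coord_smul_e t s).2]
    ring
  have hφ : HasDerivAt (fun s : ℝ => deriv (rad f) (n s) / n s)
      ((deriv (deriv (rad f)) (n 0) * (1 / (2 * n 0) * (2 * 0)) * n 0
        - deriv (rad f) (n 0) * (1 / (2 * n 0) * (2 * 0))) / (n 0)^2) 0 := by
    have hinner : HasDerivAt (fun s : ℝ => t^2 + s^2) (2 * 0) 0 := by
      have := (hasDerivAt_pow 2 (0:ℝ)).const_add (t^2)
      simpa using this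
    have hne : t^2 + (0:ℝ)^2 ≠ 0 := by positivity
    have hsq : HasDerivAt n (1 / (2 * Real.sqrt (t^2 + 0^2)) * (2 * 0)) 0 :=
      (Real.hasDerivAt_sqrt hne).comp 0 hinner
    have hsq' : HasDerivAt n (1 / (2 * n 0) * (2 * 0)) 0 := hsq
    have hγ' : HasDerivAt (deriv (rad f)) (deriv (deriv (rad f)) (n 0)) (n 0) :=
      (cd_diff (cd_deriv (rad_contDiff f hs)) (n 0)).hasDerivAt
    have hcomp : HasDerivAt (fun s => deriv (rad f) (n s))
        (deriv (deriv (rad f)) (n 0) * (1 / (2 * n 0) * (2 * 0))) 0 := hγ'.comp 0 hsq'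
    exact hcomp.div hsq' (ne_of_gt (hnpos 0))
  have hprod : HasDerivAt (fun s : ℝ => s * (deriv (rad f) (n s) / n s))
      (deriv (rad f) (n 0) / n 0) 0 := by
    have := (hasDerivAt_id (0:ℝ)).mul hφ
    simp at this; exact this
  rw [heq] at hline
  have huniq := hline.unique hprod
  have hn0 : n 0 = t := by
    simp only [hn]
    rw [show t^2 + (0:ℝ)^2 = t^2 by ring, Real.sqrt_sq ht.le]
  show fderiv ℝ (pd 1 f) (t • e₀) e₁ = _
  rw [huniq, hn0]

lemma lap_at (f : E2 → ℝ) (hs : ContDiff ℝ (⊤:ℕ∞) f)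
    (hrad : ∃ g : ℝ → ℝ, ∀ y : E2, f y = g ‖y‖) (t : ℝ) (ht : 0 < t) :
    lap f (t • e₀) = deriv (deriv (rad f)) t + deriv (rad f) t / t := by
  unfold lap
  rw [pd00_at f hs hrad t ht, pd11_at f hs hrad t ht]

/-! ### One-dimensional Pohozaev-type identity -/

lemma oneD_identity (b : Fin 2 → Fin 2 → ℝ) (hb10 : b 1 0 = b 0 1)
    (γ : Fin 2 → ℝ → ℝ) (hγs : ∀ l, ContDiff ℝ (⊤:ℕ∞) (γ l))
    (hODE : ∀ (j : Fin 2) (t : ℝ), 0 < t →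
      deriv (deriv (γ j)) t + deriv (γ j) t / t
        + b j 0 * Real.exp (γ 0 t) + b j 1 * Real.exp (γ 1 t) = 0)
    (hInt : ∀ l, IntegrableOn (fun t => t * Real.exp (γ l t)) (Set.Ioi 0))
    (hdecay : ∀ l, Tendsto (fun r => r^2 * Real.exp (γ l r)) atTop (𝓝 0)) :
    4 * ((∫ t in Set.Ioi (0:ℝ), t * Real.exp (γ 0 t))
        + (∫ t in Set.Ioi (0:ℝ), t * Real.exp (γ 1 t)))
      = b 0 0 * (∫ t in Set.Ioi (0:ℝ), t * Real.exp (γ 0 t))^2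
        + 2 * b 0 1 * ((∫ t in Set.Ioi (0:ℝ), t * Real.exp (γ 0 t))
            * (∫ t in Set.Ioi (0:ℝ), t * Real.exp (γ 1 t)))
        + b 1 1 * (∫ t in Set.Ioi (0:ℝ), t * Real.exp (γ 1 t))^2 := by
  set g : Fin 2 → ℝ → ℝ := fun l t => t * Real.exp (γ l t) with hgdef
  have hgc : ∀ l, Continuous (g l) := fun l => continuous_id.mul ((hγs l).continuous.rexp)
  set s : Fin 2 → ℝ → ℝ := fun l r => ∫ t in (0:ℝ)..r, g l t with hsdef
  have hsderiv : ∀ l r, HasDerivAt (s l) (g l r) r := by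
    intro l r
    exact intervalIntegral.integral_hasDerivAt_right ((hgc l).intervalIntegrable 0 r)
      ((hgc l).stronglyMeasurableAtFilter _ _) (hgc l).continuousAt
  have hscont : ∀ l, Continuous (s l) := fun l =>
    (Differentiable.continuous (fun r => (hsderiv l r).differentiableAt))
  have hs0 : ∀ l, s l 0 = 0 := by intro l; simp [hsdef]
  have hkey : ∀ (j : Fin 2) (r : ℝ), 0 ≤ r →
      r * deriv (γ j) r = -(b j 0 * s 0 r + b j 1 * s 1 r) := by
    intro j r hr
    have hcont : Continuous (fun t : ℝ => t * deriv (γ j) t) :=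
      continuous_id.mul (cd_deriv (hγs j)).continuous
    have hFc : Continuous (fun t : ℝ => -(b j 0 * g 0 t + b j 1 * g 1 t)) :=
      ((continuous_const.mul (hgc 0)).add (continuous_const.mul (hgc 1))).neg
    have hd : ∀ x ∈ Set.Ioo 0 r,
        HasDerivWithinAt (fun t : ℝ => t * deriv (γ j) t)
          (-(b j 0 * g 0 x + b j 1 * g 1 x)) (Set.Ioi x) x := by
      intro x hx
      have hx0 : 0 < x := hx.1
      have hda : HasDerivAt (fun t : ℝ => t * deriv (γ j) t)
          (1 * deriv (γ j) x + x * deriv (deriv (γ j)) x) x :=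
        (hasDerivAt_id x).mul (cd_diff (cd_deriv (hγs j)) x).hasDerivAt
      have hODE' := hODE j x hx0
      have hxd : x * (deriv (γ j) x / x) = deriv (γ j) x := by field_simp
      have heqF : 1 * deriv (γ j) x + x * deriv (deriv (γ j)) x
          = -(b j 0 * g 0 x + b j 1 * g 1 x) := by
        simp only [hgdef]
        linear_combination x * hODE' - hxd
      exact (heqF ▸ hda).hasDerivWithinAt
    have hFTC := intervalIntegral.integral_eq_sub_of_hasDeriv_right_of_le hr
      hcont.continuousOn hd (hFc.intervalIntegrable 0 r)
    have hsplit : ∫ t in (0:ℝ)..r, -(b j 0 * g 0 t + b j 1 * g 1 t)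
        = -(b j 0 * s 0 r + b j 1 * s 1 r) := by
      rw [intervalIntegral.integral_neg, intervalIntegral.integral_add
        (((hgc 0).const_mul (b j 0)).intervalIntegrable 0 r)
        (((hgc 1).const_mul (b j 1)).intervalIntegrable 0 r),
        intervalIntegral.integral_const_mul, intervalIntegral.integral_const_mul]
    rw [hsplit] at hFTC
    simp only [mul_zero, zero_mul, sub_zero] at hFTC
    linarith [hFTC]
  set G : ℝ → ℝ := fun r => b 0 0 * (s 0 r)^2 + 2 * b 0 1 * (s 0 r * s 1 r)
      + b 1 1 * (s 1 r)^2 - 4 * (s 0 r + s 1 r)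
      + 2 * (r^2 * Real.exp (γ 0 r) + r^2 * Real.exp (γ 1 r)) with hGdef
  have hexpd : ∀ (l : Fin 2) (r : ℝ), HasDerivAt (fun u : ℝ => u^2 * Real.exp (γ l u))
      (2 * r * Real.exp (γ l r) + r^2 * (deriv (γ l) r * Real.exp (γ l r))) r := by
    intro l r
    have hg' : HasDerivAt (γ l) (deriv (γ l) r) r := (cd_diff (hγs l) r).hasDerivAt
    have hexp : HasDerivAt (fun u => Real.exp (γ l u))
        (deriv (γ l) r * Real.exp (γ l r)) r := by
      simpa [mul_comm] using hg'.exp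
    have hsq : HasDerivAt (fun u : ℝ => u^2) (2 * r) r := by
      simpa using hasDerivAt_pow 2 r
    exact hsq.mul hexp
  have hGderiv : ∀ r : ℝ, 0 < r → HasDerivAt G 0 r := by
    intro r hr
    have h0' := hsderiv 0 r
    have h1' := hsderiv 1 r
    have H := (((((h0'.pow 2).const_mul (b 0 0)).add
        ((h0'.mul h1').const_mul (2 * b 0 1))).add
        ((h1'.pow 2).const_mul (b 1 1))).sub
        ((h0'.add h1').const_mul 4)).add
        (((hexpd 0 r).add (hexpd 1 r)).const_mul 2)
    have hzero : b 0 0 * (2 * s 0 r ^ 1 * g 0 r)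
        + 2 * b 0 1 * (g 0 r * s 1 r + s 0 r * g 1 r)
        + b 1 1 * (2 * s 1 r ^ 1 * g 1 r) - 4 * (g 0 r + g 1 r)
        + 2 * (2 * r * Real.exp (γ 0 r) + r^2 * (deriv (γ 0) r * Real.exp (γ 0 r))
          + (2 * r * Real.exp (γ 1 r) + r^2 * (deriv (γ 1) r * Real.exp (γ 1 r)))) = 0 := by
      have hk0 := hkey 0 r hr.le
      have hk1 := hkey 1 r hr.le
      simp only [hgdef, pow_one]
      linear_combination (2 * r * Real.exp (γ 0 r)) * hk0
        + (2 * r * Real.exp (γ 1 r)) * hk1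
        + (-2 * s 0 r * r * Real.exp (γ 1 r)) * hb10
    rw [hGdef]
    refine HasDerivAt.congr_deriv H ?_
    rw [← hzero]
    ring
  have hGcont : Continuous G := by
    rw [hGdef]
    have hexpc : ∀ l : Fin 2, Continuous (fun r : ℝ => Real.exp (γ l r)) :=
      fun l => (hγs l).continuous.rexp
    fun_prop
  have hG0 : ∀ r : ℝ, 0 ≤ r → G r = 0 := by
    intro r hr
    have hFTC := intervalIntegral.integral_eq_sub_of_hasDeriv_right_of_le hr
      hGcont.continuousOn
      (fun x hx => (hGderiv x hx.1).hasDerivWithinAt)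
      (intervalIntegrable_const (c := (0:ℝ)))
    have hGzero : G 0 = 0 := by
      rw [hGdef]
      simp [hs0]
    simp only [intervalIntegral.integral_zero] at hFTC
    rw [hGzero, sub_zero] at hFTC
    exact hFTC.symm
  set σ : Fin 2 → ℝ := fun l => ∫ t in Set.Ioi (0:ℝ), g l t with hσdef
  have hstend : ∀ l, Tendsto (s l) atTop (𝓝 (σ l)) := fun l =>
    intervalIntegral_tendsto_integral_Ioi 0 (hInt l) tendsto_id
  have hGtend : Tendsto G atTop (𝓝 (b 0 0 * (σ 0)^2 + 2 * b 0 1 * (σ 0 * σ 1)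
      + b 1 1 * (σ 1)^2 - 4 * (σ 0 + σ 1) + 2 * (0 + 0))) := by
    rw [hGdef]
    exact (((((((hstend 0).pow 2).const_mul (b 0 0)).add
        (((hstend 0).mul (hstend 1)).const_mul (2 * b 0 1))).add
        (((hstend 1).pow 2).const_mul (b 1 1))).sub
        (((hstend 0).add (hstend 1)).const_mul 4)).add
        (((hdecay 0).add (hdecay 1)).const_mul 2))
  have hGzero : Tendsto G atTop (𝓝 0) := by
    apply Tendsto.congr' _ tendsto_const_nhds
    filter_upwards [eventually_ge_atTop (0:ℝ)] with r hr
    exact (hG0 r hr).symm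
  have hfinal := tendsto_nhds_unique hGzero hGtend
  simp only [hσdef, hgdef] at hfinal
  linear_combination hfinal

/-! ### Integrability and decay lemmas -/

lemma exp_decay_bound (C m : ℝ) (γ : ℝ → ℝ) (hbd : ∀ t : ℝ, 1 ≤ t → γ t ≤ C - m * Real.log t)
    {t : ℝ} (ht : 1 ≤ t) : Real.exp (γ t) ≤ Real.exp C * t ^ (-m) := by
  have ht0 : 0 < t := lt_of_lt_of_le one_pos ht
  have h1 : Real.exp (γ t) ≤ Real.exp (C - m * Real.log t) :=
    Real.exp_le_exp.mpr (hbd t ht)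
  have h2 : Real.exp (C - m * Real.log t) = Real.exp C * t ^ (-m) := by
    rw [Real.rpow_def_of_pos ht0, ← Real.exp_add]
    ring_nf
  linarith [h1, h2.symm.le]

lemma integrable_g (γ : ℝ → ℝ) (hc : Continuous γ) (C m : ℝ) (hm : 2 < m)
    (hbd : ∀ t : ℝ, 1 ≤ t → γ t ≤ C - m * Real.log t) :
    IntegrableOn (fun t => t * Real.exp (γ t)) (Set.Ioi 0) := by
  have hgc : Continuous (fun t : ℝ => t * Real.exp (γ t)) := continuous_id.mul hc.rexp
  have h1 : IntegrableOn (fun t => t * Real.exp (γ t)) (Set.Ioc 0 1) :=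
    hgc.integrableOn_Ioc
  have h2 : IntegrableOn (fun t => t * Real.exp (γ t)) (Set.Ioi 1) := by
    have hbig : IntegrableOn (fun t : ℝ => Real.exp C * t ^ ((1:ℝ) - m)) (Set.Ioi 1) :=
      (integrableOn_Ioi_rpow_of_lt (by linarith) one_pos).const_mul (Real.exp C)
    refine Integrable.mono' hbig hgc.aestronglyMeasurable ?_
    filter_upwards [ae_restrict_mem measurableSet_Ioi] with t ht
    have ht1 : (1:ℝ) ≤ t := le_of_lt ht
    have ht0 : 0 < t := lt_of_lt_of_le one_pos ht1
    have hnn : 0 ≤ t * Real.exp (γ t) := by positivity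
    rw [Real.norm_eq_abs, abs_of_nonneg hnn]
    calc t * Real.exp (γ t) ≤ t * (Real.exp C * t ^ (-m)) := by
          have := exp_decay_bound C m γ hbd ht1
          exact mul_le_mul_of_nonneg_left this ht0.le
      _ = Real.exp C * t ^ ((1:ℝ) - m) := by
          rw [show (1:ℝ) - m = 1 + (-m) by ring, Real.rpow_add ht0, Real.rpow_one]
          ring
  have := h1.union h2
  apply this.mono_set
  rw [Set.Ioc_union_Ioi_eq_Ioi (by norm_num : (0:ℝ) ≤ 1)]

lemma tendsto_sq_exp (γ : ℝ → ℝ) (C m : ℝ) (hm : 2 < m)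
    (hbd : ∀ t : ℝ, 1 ≤ t → γ t ≤ C - m * Real.log t) :
    Tendsto (fun r => r^2 * Real.exp (γ r)) atTop (𝓝 0) := by
  have hlim : Tendsto (fun r : ℝ => Real.exp C * r ^ ((2:ℝ) - m)) atTop (𝓝 0) := by
    have := (tendsto_rpow_neg_atTop (by linarith : (0:ℝ) < m - 2)).const_mul (Real.exp C)
    simpa [show -(m-2) = (2:ℝ)-m by ring] using this
  refine tendsto_of_tendsto_of_tendsto_of_le_of_le' tendsto_const_nhds hlim ?_ ?_
  · filter_upwards [eventually_ge_atTop (1:ℝ)] with r hr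
    positivity
  · filter_upwards [eventually_ge_atTop (1:ℝ)] with r hr
    have hr0 : 0 < r := lt_of_lt_of_le one_pos hr
    calc r^2 * Real.exp (γ r) ≤ r^2 * (Real.exp C * r ^ (-m)) := by
          have := exp_decay_bound C m γ hbd hr
          exact mul_le_mul_of_nonneg_left this (by positivity)
      _ = Real.exp C * r ^ ((2:ℝ) - m) := by
          rw [show (2:ℝ) - m = 2 + (-m) by ring, Real.rpow_add hr0,
            show ((2:ℝ):ℝ) = ((2:ℕ):ℝ) by norm_num, Real.rpow_natCast]
          ring

lemma E2_ball_vol : (volume (Metric.ball (0:E2) 1)).toReal = π := by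
  rw [EuclideanSpace.volume_ball]
  simp only [Fintype.card_fin]
  rw [show ((2:ℕ):ℝ)/2 + 1 = 2 by norm_num, Real.Gamma_two]
  rw [Real.sq_sqrt pi_nonneg]
  simp [ENNReal.toReal_ofReal pi_nonneg]

lemma E2_integral (γ : ℝ → ℝ) :
    (∫ y : E2, Real.exp (γ ‖y‖)) = 2 * π * ∫ t in Set.Ioi (0:ℝ), t * Real.exp (γ t) := by
  have h := MeasureTheory.integral_fun_norm_addHaar (volume : Measure E2)
    (fun t => Real.exp (γ t))
  rw [h]
  rw [finrank_euclideanSpace_fin, measureReal_def, E2_ball_vol]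
  rw [show (2:ℕ) - 1 = 1 by norm_num]
  simp only [pow_one, smul_eq_mul, nsmul_eq_mul]
  push_cast
  ring

/-- Pohozaev identity for the Liouville system: with
`σ_l = (1/2π)∫ e^{Γ_l}`, one has `4(σ₁+σ₂) = b₁₁σ₁² + 2b₁₂σ₁σ₂ + b₂₂σ₂²`. -/
theorem stmt_7 (b : Fin 2 → Fin 2 → ℝ) (Γ : Fin 2 → E2 → ℝ) (m : Fin 2 → ℝ)
    (hb : SymmPosDefPos b) (hΓ : RadialLiouvillePair b Γ m) :
    4 * ((2 * π)⁻¹ * (∫ y : E2, Real.exp (Γ 0 y))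
          + (2 * π)⁻¹ * (∫ y : E2, Real.exp (Γ 1 y)))
      = b 0 0 * ((2 * π)⁻¹ * ∫ y : E2, Real.exp (Γ 0 y)) ^ 2
        + 2 * b 0 1 * ((2 * π)⁻¹ * ∫ y : E2, Real.exp (Γ 0 y))
          * ((2 * π)⁻¹ * ∫ y : E2, Real.exp (Γ 1 y))
        + b 1 1 * ((2 * π)⁻¹ * ∫ y : E2, Real.exp (Γ 1 y)) ^ 2 := by
  have hb10 : b 1 0 = b 0 1 := hb.1 1 0
  set γ : Fin 2 → ℝ → ℝ := fun j => rad (Γ j) with hγdef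
  have hγs : ∀ l, ContDiff ℝ (⊤:ℕ∞) (γ l) := fun l => rad_contDiff _ (hΓ.smooth l)
  have hΓγ : ∀ (l : Fin 2) (y : E2), Γ l y = γ l ‖y‖ :=
    fun l => radial_formula _ (hΓ.radial l)
  -- the radial ODE
  have hODE : ∀ (j : Fin 2) (t : ℝ), 0 < t →
      deriv (deriv (γ j)) t + deriv (γ j) t / t
        + b j 0 * Real.exp (γ 0 t) + b j 1 * Real.exp (γ 1 t) = 0 := by
    intro j t ht
    have hsys := hΓ.system j (t • e₀)
    rw [lap_at (Γ j) (hΓ.smooth j) (hΓ.radial j) t ht] at hsys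
    have h0 : Γ 0 (t • e₀) = γ 0 t := rfl
    have h1 : Γ 1 (t • e₀) = γ 1 t := rfl
    rw [h0, h1] at hsys
    linarith
  -- decay bounds for the radial profiles
  obtain ⟨C₀, hC₀pos, hdec⟩ := hΓ.decay
  have hbd : ∀ (l : Fin 2) (t : ℝ), 1 ≤ t → γ l t ≤ C₀ - m l * Real.log t := by
    intro l t ht
    have ht0 : (0:ℝ) ≤ t := by linarith
    have hnorm : ‖t • e₀‖ = t := by rw [norm_smul_e₀, abs_of_nonneg ht0]
    have := hdec l (t • e₀) (by rw [hnorm]; exact ht)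
    rw [hnorm] at this
    have hΓeq : Γ l (t • e₀) = γ l t := rfl
    rw [hΓeq] at this
    have := (abs_le.mp this).2
    linarith
  have hInt : ∀ l, IntegrableOn (fun t => t * Real.exp (γ l t)) (Set.Ioi 0) :=
    fun l => integrable_g (γ l) (hγs l).continuous C₀ (m l) (hΓ.m_gt_two l) (hbd l)
  have hdecay : ∀ l, Tendsto (fun r => r^2 * Real.exp (γ l r)) atTop (𝓝 0) :=
    fun l => tendsto_sq_exp (γ l) C₀ (m l) (hΓ.m_gt_two l) (hbd l)
  have hid := oneD_identity b hb10 γ hγs hODE hInt hdecay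
  -- convert the planar integrals
  have hvol : ∀ l : Fin 2, (2 * π)⁻¹ * (∫ y : E2, Real.exp (Γ l y))
      = ∫ t in Set.Ioi (0:ℝ), t * Real.exp (γ l t) := by
    intro l
    have heq : (∫ y : E2, Real.exp (Γ l y)) = ∫ y : E2, Real.exp (γ l ‖y‖) := by
      congr 1
      funext y
      rw [hΓγ l y]
    rw [heq, E2_integral (γ l)]
    have h2π : (2 * π) ≠ 0 := by positivity
    field_simp
  rw [hvol 0, hvol 1]
  linear_combination hid
end
end

section
/- Log-growth solutions of the radial linearized system: Let m > 2 and C₀ > 0, let V₁, V₂ : [0,∞) → ℝ be continuous functions with |V_l(r)| ≤ C₀(1+r)^{−m} for all r ≥ 0 and l = 1,2, and let (c_{jl})_{j,l=1,2} be any real 2×2 matrix. Then the system of ODEs on (0,∞): w₁''(r) + w₁'(r)/r + (c₁₁ w₁(r) + c₁₂ w₂(r)) V₁(r) = 0 and w₂''(r) + w₂'(r)/r + (c₂₁ w₁(r) + c₂₂ w₂(r)) V₂(r) = 0 admits two linearly independent solution pairs (w₁, w₂), each of which extends continuously to [0,∞) and satisfies |wⱼ(r)| ≤ C log(2+r) for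 all r ≥ 0 and some constant C > 0. -/
open MeasureTheory Set intervalIntegral

namespace S10

noncomputable section

/-! ### Elementary log estimates -/

lemma log_le_rpow_div {x d : ℝ} (hx : 1 ≤ x) (hd : 0 < d) : Real.log x ≤ x ^ d / d := by
  have hx0 : (0:ℝ) < x := lt_of_lt_of_le one_pos hx
  have h := Real.log_le_sub_one_of_pos (Real.rpow_pos_of_pos hx0 d)
  rw [Real.log_rpow hx0] at h
  have hp : (0:ℝ) < x ^ d := Real.rpow_pos_of_pos hx0 d
  rw [div_eq_mul_inv]
  have hdi : 0 < d⁻¹ := inv_pos.2 hd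
  calc Real.log x = d⁻¹ * (d * Real.log x) := by field_simp
    _ ≤ d⁻¹ * (x ^ d - 1) := by nlinarith
    _ ≤ x ^ d * d⁻¹ := by nlinarith

lemma abs_log_le_sqrt {s : ℝ} (h0 : 0 < s) (h1 : s ≤ 1) :
    |Real.log s| ≤ 4 / Real.sqrt (Real.sqrt s) := by
  have hlog : Real.log s ≤ 0 := Real.log_nonpos (le_of_lt h0) h1
  have hinv : 1 ≤ s⁻¹ := (one_le_inv_iff₀).2 ⟨h0, h1⟩
  have h2 : Real.log s⁻¹ = 4 * Real.log (Real.sqrt (Real.sqrt s⁻¹)) := by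
    rw [Real.log_sqrt (Real.sqrt_nonneg _), Real.log_sqrt (inv_nonneg.2 (le_of_lt h0))]
    ring
  have h3 : Real.log (Real.sqrt (Real.sqrt s⁻¹)) ≤ Real.sqrt (Real.sqrt s⁻¹) := by
    have := Real.log_le_sub_one_of_pos (x := Real.sqrt (Real.sqrt s⁻¹)) (by positivity)
    linarith
  have h4 : Real.sqrt (Real.sqrt s⁻¹) = (Real.sqrt (Real.sqrt s))⁻¹ := by
    rw [Real.sqrt_inv, Real.sqrt_inv]
  have habs : |Real.log s| = Real.log s⁻¹ := by
    rw [Real.log_inv]; rw [abs_of_nonpos hlog]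
  rw [habs, h2, h4]
  have := h3
  rw [h4] at this
  rw [div_eq_mul_inv]
  nlinarith [this]

lemma sqrt_sqrt_ge {s : ℝ} (h0 : 0 ≤ s) (h1 : s ≤ 1) :
    Real.sqrt s ≤ Real.sqrt (Real.sqrt s) := by
  have h2 : Real.sqrt s ≤ 1 := by rw [show (1:ℝ) = Real.sqrt 1 by simp]; exact Real.sqrt_le_sqrt h1
  have h3 : 0 ≤ Real.sqrt s := Real.sqrt_nonneg s
  nlinarith [Real.sq_sqrt h3, Real.sqrt_nonneg (Real.sqrt s)]

/-- `s·|log s| ≤ 4·√s` on `(0,1]`. -/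
lemma mul_abs_log_le {s : ℝ} (h0 : 0 < s) (h1 : s ≤ 1) :
    s * |Real.log s| ≤ 4 * Real.sqrt s := by
  have h2 := abs_log_le_sqrt h0 h1
  have h3 := sqrt_sqrt_ge (le_of_lt h0) h1
  have hs4 : 0 < Real.sqrt s := Real.sqrt_pos.2 h0
  have hs5 : 0 < Real.sqrt (Real.sqrt s) := lt_of_lt_of_le hs4 h3
  have h6 : s * |Real.log s| ≤ s * (4 / Real.sqrt (Real.sqrt s)) := by
    apply mul_le_mul_of_nonneg_left h2 (le_of_lt h0)
  refine h6.trans ?_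
  have h7 : s * (4 / Real.sqrt (Real.sqrt s)) ≤ s * (4 / Real.sqrt s) := by
    apply mul_le_mul_of_nonneg_left _ (le_of_lt h0)
    apply div_le_div_of_nonneg_left (by norm_num) hs4 h3
  refine h7.trans ?_
  rw [mul_div_assoc']
  rw [div_le_iff₀ hs4]
  nlinarith [Real.sq_sqrt (le_of_lt h0)]

/-- the key elementary inequality for the Bielecki estimate -/
lemma log_ineq {s r : ℝ} (h0 : 0 < s) (hsr : s ≤ r) :
    (1 + max (Real.log s) 0) * (Real.log r - Real.log s) ≤
      (1 + max (Real.log r) 0) * (1 + |Real.log s|) ^ 2 := by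
  set a := Real.log s
  set b := Real.log r
  have hab : a ≤ b := Real.log_le_log h0 hsr
  have h1 : max a 0 ≤ |a| := max_le (le_abs_self a) (abs_nonneg a)
  have h2 : b ≤ max b 0 := le_max_left b 0
  have h3 : 0 ≤ max b 0 := le_max_right b 0
  have h4 : -a ≤ |a| := neg_le_abs a
  have h5 : 0 ≤ |a| := abs_nonneg a
  nlinarith [mul_nonneg h3 h5, mul_nonneg (mul_nonneg h3 h5) h5, mul_nonneg h5 h5]

/-! ### The weight -/

section Weight

variable (C₀ m : ℝ) (c : Fin 2 → Fin 2 → ℝ)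

def Lc : ℝ := 1 + max (|c 0 0| + |c 0 1|) (|c 1 0| + |c 1 1|)

lemma Lc_pos : 0 < Lc c := by
  have : (0:ℝ) ≤ max (|c 0 0| + |c 0 1|) (|c 1 0| + |c 1 1|) :=
    le_max_of_le_left (by positivity)
  unfold Lc; linarith

lemma Lc_ge (j : Fin 2) : |c j 0| + |c j 1| ≤ Lc c := by
  unfold Lc
  fin_cases j
  · show |c 0 0| + |c 0 1| ≤ _
    have := le_max_left (|c 0 0| + |c 0 1|) (|c 1 0| + |c 1 1|); linarith
  · show |c 1 0| + |c 1 1| ≤ _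
    have := le_max_right (|c 0 0| + |c 0 1|) (|c 1 0| + |c 1 1|); linarith

lemma dot_le (j : Fin 2) (y : Fin 2 → ℝ) :
    |c j 0 * y 0 + c j 1 * y 1| ≤ Lc c * ‖y‖ := by
  have h0 : |y 0| ≤ ‖y‖ := by simpa using norm_le_pi_norm y 0
  have h1 : |y 1| ≤ ‖y‖ := by simpa using norm_le_pi_norm y 1
  have hL := Lc_ge c j
  have hn : 0 ≤ ‖y‖ := norm_nonneg y
  calc |c j 0 * y 0 + c j 1 * y 1| ≤ |c j 0| * |y 0| + |c j 1| * |y 1| := by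
        refine (abs_add_le _ _).trans ?_; rw [abs_mul, abs_mul]
    _ ≤ (|c j 0| + |c j 1|) * ‖y‖ := by nlinarith [abs_nonneg (c j 0), abs_nonneg (c j 1)]
    _ ≤ Lc c * ‖y‖ := by nlinarith

def hh (s : ℝ) : ℝ :=
  Lc c * C₀ * (max s 0 * (1 + max s 0) ^ (-m) * (1 + |Real.log s|) ^ 2)

lemma hh_nonneg (hC₀ : 0 ≤ C₀) (s : ℝ) : 0 ≤ hh C₀ m c s := by
  unfold hh
  have h1 : (0:ℝ) ≤ max s 0 := le_max_right s 0
  have h2 : (0:ℝ) < (1 + max s 0) ^ (-m) := Real.rpow_pos_of_pos (by linarith) _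
  have := Lc_pos c
  positivity

lemma hh_zero (s : ℝ) (hs : s ≤ 0) : hh C₀ m c s = 0 := by
  unfold hh
  rw [max_eq_right hs]
  ring

lemma hh_small (hC₀ : 0 ≤ C₀) (hm : 0 ≤ m) {s : ℝ} (hs : |s| ≤ 1) :
    hh C₀ m c s ≤ Lc c * C₀ * 25 * Real.sqrt |s| := by
  have hLc := Lc_pos c
  rcases le_or_gt s 0 with h | h
  · rw [hh_zero]
    · positivity
    · exact h
  · have hs1 : s ≤ 1 := le_trans (le_abs_self s) hs
    have habs : |s| = s := abs_of_pos h
    rw [habs]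
    unfold hh
    rw [max_eq_left (le_of_lt h)]
    have hrp : (1 + s) ^ (-m) ≤ 1 := by
      calc (1 + s) ^ (-m) ≤ (1:ℝ) ^ (-m) :=
            Real.rpow_le_rpow_of_nonpos one_pos (by linarith) (by linarith)
        _ = 1 := Real.one_rpow _
    have hsp : 0 < Real.sqrt s := Real.sqrt_pos.2 h
    have hssp : 0 < Real.sqrt (Real.sqrt s) := Real.sqrt_pos.2 hsp
    have h1l : 1 + |Real.log s| ≤ 5 / Real.sqrt (Real.sqrt s) := by
      have ha := abs_log_le_sqrt h hs1
      have hss1 : Real.sqrt (Real.sqrt s) ≤ 1 := by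
        rw [show (1:ℝ) = Real.sqrt (Real.sqrt 1) by simp]
        exact Real.sqrt_le_sqrt (Real.sqrt_le_sqrt hs1)
      have h1 : (1:ℝ) ≤ 1 / Real.sqrt (Real.sqrt s) := by
        rw [le_div_iff₀ hssp]; linarith
      have h45 : 4 / Real.sqrt (Real.sqrt s) + 1 / Real.sqrt (Real.sqrt s)
          = 5 / Real.sqrt (Real.sqrt s) := by ring
      linarith
    have hsq : (1 + |Real.log s|) ^ 2 ≤ 25 / Real.sqrt s := by
      have h2 : (1 + |Real.log s|) ^ 2 ≤ (5 / Real.sqrt (Real.sqrt s)) ^ 2 := by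
        have hn : (0:ℝ) ≤ 1 + |Real.log s| := by positivity
        nlinarith [abs_nonneg (Real.log s)]
      have h3 : (5 / Real.sqrt (Real.sqrt s)) ^ 2 = 25 / Real.sqrt s := by
        rw [div_pow, Real.sq_sqrt (le_of_lt hsp)]; norm_num
      linarith [h2, h3.le]
    have hrpn : (0:ℝ) ≤ (1 + s) ^ (-m) := le_of_lt (Real.rpow_pos_of_pos (by linarith) _)
    have hmain : s * (1 + s) ^ (-m) * (1 + |Real.log s|) ^ 2 ≤ 25 * Real.sqrt s := by
      have hc1 : (1 + s) ^ (-m) * (1 + |Real.log s|) ^ 2 ≤ 25 / Real.sqrt s := by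
        calc (1 + s) ^ (-m) * (1 + |Real.log s|) ^ 2
            ≤ 1 * (25 / Real.sqrt s) := by
              apply mul_le_mul hrp hsq (by positivity) one_pos.le
          _ = 25 / Real.sqrt s := one_mul _
      calc s * (1 + s) ^ (-m) * (1 + |Real.log s|) ^ 2
          = s * ((1 + s) ^ (-m) * (1 + |Real.log s|) ^ 2) := by ring
        _ ≤ s * (25 / Real.sqrt s) := mul_le_mul_of_nonneg_left hc1 (le_of_lt h)
        _ = 25 * (s / Real.sqrt s) := by ring
        _ = 25 * Real.sqrt s := by rw [Real.div_sqrt]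
    calc Lc c * C₀ * (s * (1 + s) ^ (-m) * (1 + |Real.log s|) ^ 2)
        ≤ Lc c * C₀ * (25 * Real.sqrt s) := by
          apply mul_le_mul_of_nonneg_left hmain (by positivity)
      _ = Lc c * C₀ * 25 * Real.sqrt s := by ring

lemma hh_continuous (hC₀ : 0 ≤ C₀) (hm : 0 ≤ m) : Continuous (hh C₀ m c) := by
  rw [continuous_iff_continuousAt]
  intro s₀
  rcases eq_or_ne s₀ 0 with rfl | hne
  · -- squeeze at 0
    have hval : hh C₀ m c 0 = 0 := hh_zero C₀ m c 0 le_rfl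
    rw [ContinuousAt, hval]
    have hb : ∀ s : ℝ, |s| ≤ 1 → ‖hh C₀ m c s‖ ≤ Lc c * C₀ * 25 * Real.sqrt |s| := by
      intro s hs
      rw [Real.norm_eq_abs, abs_of_nonneg (hh_nonneg C₀ m c hC₀ s)]
      exact hh_small C₀ m c hC₀ hm hs
    apply squeeze_zero_norm' (a := fun s => Lc c * C₀ * 25 * Real.sqrt |s|)
    · filter_upwards [Metric.ball_mem_nhds (0:ℝ) one_pos] with s hs
      exact hb s (le_of_lt (by simpa [Real.dist_eq] using hs))
    · have hcg : Continuous fun s : ℝ => Lc c * C₀ * 25 * Real.sqrt |s| := by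
        continuity
      have h0 := hcg.tendsto 0
      simpa using h0
  · -- away from 0 everything is continuous
    have hlog : ContinuousAt Real.log s₀ := Real.continuousAt_log hne
    have h1 : ContinuousAt (fun s : ℝ => max s 0 * (1 + max s 0) ^ (-m)) s₀ := by
      apply ContinuousAt.mul
      · exact (continuous_id.max continuous_const).continuousAt
      · apply ContinuousAt.rpow_const
        · exact (continuous_const.add (continuous_id.max continuous_const)).continuousAt
        · left
          have : (0:ℝ) ≤ max s₀ 0 := le_max_right _ _
          intro hc; linarith [hc ▸ this]
    have h2 : ContinuousAt (fun s : ℝ => (1 + |Real.log s|) ^ 2) s₀ := by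
      exact ((continuous_const.continuousAt.add hlog.abs)).pow 2
    unfold hh
    exact continuousAt_const.mul (h1.mul h2)

lemma hh_integrableOn (hC₀ : 0 ≤ C₀) (hm : 2 < m) :
    IntegrableOn (hh C₀ m c) (Ioi (0:ℝ)) := by
  have hcont := hh_continuous C₀ m c hC₀ (by linarith)
  have h1 : IntegrableOn (hh C₀ m c) (Ioc (0:ℝ) 1) := by
    apply (hcont.continuousOn).integrableOn_compact (K := Icc (0:ℝ) 1) isCompact_Icc |>.mono_set
    exact Ioc_subset_Icc_self
  have h2 : IntegrableOn (hh C₀ m c) (Ioi (1:ℝ)) := by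
    set δ : ℝ := (m - 2) / 4 with hδ
    have hδ0 : 0 < δ := by rw [hδ]; linarith
    set K : ℝ := Lc c * C₀ * (1 + 1 / δ) ^ 2 with hK
    have hLc := Lc_pos c
    have hK0 : 0 ≤ K := by positivity
    have hdom : ∀ s ∈ Ioi (1:ℝ), ‖hh C₀ m c s‖ ≤ K * s ^ (-(m / 2)) := by
      intro s hs
      simp only [mem_Ioi] at hs
      have hs0 : (0:ℝ) < s := lt_trans one_pos hs
      rw [Real.norm_eq_abs, abs_of_nonneg (hh_nonneg C₀ m c hC₀ s)]
      unfold hh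
      rw [max_eq_left (le_of_lt hs0)]
      have hlog : |Real.log s| = Real.log s := abs_of_nonneg (Real.log_nonneg (le_of_lt hs))
      have hlb : Real.log s ≤ s ^ δ / δ := log_le_rpow_div (le_of_lt hs) hδ0
      have hone : (1:ℝ) ≤ s ^ δ := Real.one_le_rpow (le_of_lt hs) (le_of_lt hδ0)
      have hfact : 1 + |Real.log s| ≤ (1 + 1/δ) * s ^ δ := by
        rw [hlog]
        have hd : s ^ δ / δ = (1/δ) * s ^ δ := by ring
        nlinarith
      have hsd2 : (s ^ δ) ^ 2 = s ^ (2 * δ) := by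
        rw [← Real.rpow_natCast (s ^ δ) 2, ← Real.rpow_mul (le_of_lt hs0)]
        norm_num [mul_comm]
      have hsq : (1 + |Real.log s|) ^ 2 ≤ (1 + 1/δ) ^ 2 * s ^ (2 * δ) := by
        have hn : (0:ℝ) ≤ 1 + |Real.log s| := by positivity
        rw [← hsd2]
        nlinarith [hfact, hn]
      have hrp : (1 + s) ^ (-m) ≤ s ^ (-m) :=
        Real.rpow_le_rpow_of_nonpos hs0 (by linarith) (by linarith)
      have hrpn : (0:ℝ) < s ^ (-m) := Real.rpow_pos_of_pos hs0 _
      have hrpn2 : (0:ℝ) < s ^ (2*δ) := Real.rpow_pos_of_pos hs0 _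
      have hcomb : s * s ^ (-m) * s ^ (2 * δ) = s ^ (-(m/2)) := by
        have he : -(m/2) = 1 + -m + 2*δ := by rw [hδ]; ring
        rw [he, Real.rpow_add hs0, Real.rpow_add hs0, Real.rpow_one]
      calc Lc c * C₀ * (s * (1 + s) ^ (-m) * (1 + |Real.log s|) ^ 2)
          ≤ Lc c * C₀ * (s * s ^ (-m) * ((1 + 1/δ) ^ 2 * s ^ (2*δ))) := by
            apply mul_le_mul_of_nonneg_left _ (by positivity)
            apply mul_le_mul (mul_le_mul_of_nonneg_left hrp (le_of_lt hs0)) hsq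
              (by positivity) (by positivity)
        _ = K * (s * s ^ (-m) * s ^ (2*δ)) := by rw [hK]; ring
        _ = K * s ^ (-(m/2)) := by rw [hcomb]
    have hint : IntegrableOn (fun s : ℝ => K * s ^ (-(m/2))) (Ioi (1:ℝ)) :=
      (integrableOn_Ioi_rpow_of_lt (by linarith) one_pos).const_mul K
    exact Integrable.mono' hint hcont.aestronglyMeasurable.restrict
      ((ae_restrict_iff' measurableSet_Ioi).2 (Filter.Eventually.of_forall hdom))
  have hsplit : Ioi (0:ℝ) = Ioc 0 1 ∪ Ioi 1 := (Ioc_union_Ioi_eq_Ioi zero_le_one).symm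
  rw [hsplit]
  exact h1.union h2

lemma hh_integrable (hC₀ : 0 ≤ C₀) (hm : 2 < m) : Integrable (hh C₀ m c) := by
  rw [← integrableOn_univ]
  have h0 : IntegrableOn (hh C₀ m c) (Iic (0:ℝ)) := by
    apply (integrableOn_zero (s := Iic (0:ℝ))).congr_fun _ measurableSet_Iic
    intro s hs
    exact (hh_zero C₀ m c s hs).symm
  refine IntegrableOn.mono_set (h0.union (hh_integrableOn C₀ m c hC₀ hm)) ?_
  intro x _
  simp only [mem_union, mem_Iic, mem_Ioi]
  exact le_or_gt x 0

def HH (r : ℝ) : ℝ := ∫ t in (0:ℝ)..r, hh C₀ m c t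

lemma HH_hasDerivAt (hC₀ : 0 ≤ C₀) (hm : 0 ≤ m) (r : ℝ) :
    HasDerivAt (HH C₀ m c) (hh C₀ m c r) r :=
  ((hh_continuous C₀ m c hC₀ hm).integral_hasStrictDerivAt 0 r).hasDerivAt

lemma HH_continuous (hC₀ : 0 ≤ C₀) (hm : 2 < m) : Continuous (HH C₀ m c) :=
  (hh_integrable C₀ m c hC₀ hm).continuous_primitive 0

lemma HH_zero {r : ℝ} (hr : r ≤ 0) : HH C₀ m c r = 0 := by
  unfold HH
  calc ∫ t in (0:ℝ)..r, hh C₀ m c t = ∫ t in (0:ℝ)..r, (0:ℝ) := by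
        apply intervalIntegral.integral_congr
        intro t ht
        rw [uIcc_of_ge hr] at ht
        exact hh_zero C₀ m c t ht.2
    _ = 0 := by simp

lemma HH_nonneg (hC₀ : 0 ≤ C₀) (r : ℝ) : 0 ≤ HH C₀ m c r := by
  rcases le_or_gt r 0 with h | h
  · rw [HH_zero C₀ m c h]
  · exact intervalIntegral.integral_nonneg (le_of_lt h)
      (fun s _ => hh_nonneg C₀ m c hC₀ s)

def Htop : ℝ := ∫ s in Ioi (0:ℝ), hh C₀ m c s

lemma HH_le_Htop (hC₀ : 0 ≤ C₀) (hm : 2 < m) (r : ℝ) : HH C₀ m c r ≤ Htop C₀ m c := by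
  have h0 : (0:ℝ) ≤ Htop C₀ m c :=
    setIntegral_nonneg measurableSet_Ioi (fun s _ => hh_nonneg C₀ m c hC₀ s)
  rcases le_or_gt r 0 with h | h
  · rw [HH_zero C₀ m c h]; exact h0
  · unfold HH
    rw [intervalIntegral.integral_of_le (le_of_lt h)]
    apply setIntegral_mono_set (hh_integrableOn C₀ m c hC₀ hm)
    · exact Filter.Eventually.of_forall (fun s => hh_nonneg C₀ m c hC₀ s)
    · exact Filter.Eventually.of_forall (fun s hs => hs.1)

def Wf (r : ℝ) : ℝ := (1 + max (Real.log r) 0) * Real.exp (2 * HH C₀ m c r)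

lemma Wf_pos (hC₀ : 0 ≤ C₀) (r : ℝ) : 0 < Wf C₀ m c r := by
  unfold Wf
  have h1 : (0:ℝ) ≤ max (Real.log r) 0 := le_max_right _ _
  positivity

lemma one_le_Wf (hC₀ : 0 ≤ C₀) (r : ℝ) : 1 ≤ Wf C₀ m c r := by
  unfold Wf
  have h1 : (0:ℝ) ≤ max (Real.log r) 0 := le_max_right _ _
  have h2 : (1:ℝ) ≤ Real.exp (2 * HH C₀ m c r) := by
    rw [show (1:ℝ) = Real.exp 0 by simp]
    exact Real.exp_le_exp.2 (by nlinarith [HH_nonneg C₀ m c hC₀ r])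
  nlinarith

lemma logmax_continuous : Continuous (fun r : ℝ => 1 + max (Real.log r) 0) := by
  rw [continuous_iff_continuousAt]
  intro r
  rcases eq_or_ne r 0 with rfl | hne
  · have hloc : ∀ᶠ s in nhds (0:ℝ), (fun r : ℝ => 1 + max (Real.log r) 0) s = 1 := by
      filter_upwards [Metric.ball_mem_nhds (0:ℝ) one_pos] with s hs
      rw [Metric.mem_ball, Real.dist_eq, sub_zero] at hs
      rcases eq_or_ne s 0 with rfl | hs0
      · simp
      · have : Real.log s < 0 := by
          rw [← Real.log_abs]
          exact Real.log_neg (abs_pos.2 hs0) hs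
        simp [max_eq_right (le_of_lt this)]
    have h1 : ContinuousAt (fun _ : ℝ => (1:ℝ)) 0 := continuousAt_const
    apply h1.congr
    filter_upwards [hloc] with s hs using hs.symm
  · exact continuousAt_const.add ((Real.continuousAt_log hne).max continuousAt_const)

lemma Wf_continuous (hC₀ : 0 ≤ C₀) (hm : 2 < m) : Continuous (Wf C₀ m c) := by
  unfold Wf
  exact (logmax_continuous).mul ((continuous_const.mul (HH_continuous C₀ m c hC₀ hm)).rexp)

lemma Wf_le (hC₀ : 0 ≤ C₀) (hm : 2 < m) (r : ℝ) :
    Wf C₀ m c r ≤ (1 + max (Real.log r) 0) * Real.exp (2 * Htop C₀ m c) := by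
  unfold Wf
  have h1 : (0:ℝ) ≤ max (Real.log r) 0 := le_max_right _ _
  apply mul_le_mul_of_nonneg_left _ (by linarith)
  exact Real.exp_le_exp.2 (by nlinarith [HH_le_Htop C₀ m c hC₀ hm r])

/-- An upper bound for `Wf` on `[-1,1]`. -/
lemma Wf_le_small (hC₀ : 0 ≤ C₀) (hm : 2 < m) {s : ℝ} (hs : |s| ≤ 1) :
    Wf C₀ m c s ≤ Real.exp (2 * Htop C₀ m c) := by
  have h2 : max (Real.log s) 0 = 0 := by
    rcases eq_or_ne s 0 with rfl | hs0
    · simp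
    · apply max_eq_right
      rw [← Real.log_abs]
      exact Real.log_nonpos (abs_nonneg s) hs
  calc Wf C₀ m c s ≤ (1 + max (Real.log s) 0) * Real.exp (2 * Htop C₀ m c) :=
        Wf_le C₀ m c hC₀ hm s
    _ = Real.exp (2 * Htop C₀ m c) := by rw [h2]; ring

/-- The fundamental Bielecki integral inequality. -/
lemma bielecki (hC₀ : 0 ≤ C₀) (hm : 2 < m) {r : ℝ} (hr : 0 ≤ r) :
    ∫ s in (0:ℝ)..r, hh C₀ m c s * Real.exp (2 * HH C₀ m c s) ≤
      Real.exp (2 * HH C₀ m c r) / 2 := by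
  have hcont := hh_continuous C₀ m c hC₀ (by linarith)
  have hHc := HH_continuous C₀ m c hC₀ hm
  have hd : ∀ t ∈ uIcc (0:ℝ) r,
      HasDerivAt (fun t => Real.exp (2 * HH C₀ m c t) / 2)
        (hh C₀ m c t * Real.exp (2 * HH C₀ m c t)) t := by
    intro t _
    have h1 : HasDerivAt (fun t => 2 * HH C₀ m c t) (2 * hh C₀ m c t) t :=
      (HH_hasDerivAt C₀ m c hC₀ (by linarith) t).const_mul 2
    have h2 := h1.exp
    have h3 := h2.div_const 2
    refine h3.congr_deriv ?_
    ring
  have hint : IntervalIntegrable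
      (fun s => hh C₀ m c s * Real.exp (2 * HH C₀ m c s)) volume 0 r :=
    (hcont.mul ((continuous_const.mul hHc).rexp)).intervalIntegrable 0 r
  have heq := intervalIntegral.integral_eq_sub_of_hasDerivAt hd hint
  rw [heq]
  have h0 : HH C₀ m c 0 = 0 := HH_zero C₀ m c le_rfl
  rw [h0]
  have : (0:ℝ) < Real.exp (2 * HH C₀ m c r) := Real.exp_pos _
  simp only [mul_zero, Real.exp_zero]
  linarith

end Weight

/-! ### The integral operator -/

section Op

variable (C₀ m : ℝ) (c : Fin 2 → Fin 2 → ℝ) (Vt : Fin 2 → ℝ → ℝ)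

def kf (u : ℝ → Fin 2 → ℝ) (j : Fin 2) (s : ℝ) : ℝ :=
  max s 0 * Vt j s * (c j 0 * u s 0 + c j 1 * u s 1)

def Pf (u : ℝ → Fin 2 → ℝ) (j : Fin 2) (r : ℝ) : ℝ := ∫ s in (0:ℝ)..r, kf c Vt u j s

def Qf (u : ℝ → Fin 2 → ℝ) (j : Fin 2) (r : ℝ) : ℝ :=
  ∫ s in (0:ℝ)..r, kf c Vt u j s * Real.log s

def Tf (a : Fin 2 → ℝ) (u : ℝ → Fin 2 → ℝ) (j : Fin 2) (r : ℝ) : ℝ :=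
  a j - (Real.log r * Pf c Vt u j r - Qf c Vt u j r)

variable {u : ℝ → Fin 2 → ℝ}

lemma kf_continuous (hVtc : ∀ j, Continuous (Vt j)) (hu : Continuous u) (j : Fin 2) :
    Continuous (kf c Vt u j) := by
  unfold kf
  have h0 : Continuous (fun s => u s 0) := (continuous_apply 0).comp hu
  have h1 : Continuous (fun s => u s 1) := (continuous_apply 1).comp hu
  fun_prop

lemma kf_zero (j : Fin 2) {s : ℝ} (hs : s ≤ 0) : kf c Vt u j s = 0 := by
  unfold kf
  rw [max_eq_right hs]
  ring

lemma kf_sub (v : ℝ → Fin 2 → ℝ) (j : Fin 2) (s : ℝ) :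
    kf c Vt u j s - kf c Vt v j s = kf c Vt (u - v) j s := by
  unfold kf
  simp only [Pi.sub_apply]
  ring

lemma kf_bound (hC₀ : 0 ≤ C₀) (hVtb : ∀ (j : Fin 2) (s : ℝ), 0 ≤ s → |Vt j s| ≤ C₀ * (1 + s) ^ (-m))
    {B : ℝ} (hB : ∀ s : ℝ, ‖u s‖ ≤ B * Wf C₀ m c s)
    (j : Fin 2) {s : ℝ} (hs : 0 ≤ s) :
    |kf c Vt u j s| ≤ C₀ * Lc c * B * (s * (1 + s) ^ (-m) * Wf C₀ m c s) := by
  unfold kf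
  rw [max_eq_left hs, abs_mul, abs_mul]
  have h1 : |Vt j s| ≤ C₀ * (1 + s) ^ (-m) := hVtb j s hs
  have h2 : |c j 0 * u s 0 + c j 1 * u s 1| ≤ Lc c * ‖u s‖ := dot_le c j (u s)
  have h3 : ‖u s‖ ≤ B * Wf C₀ m c s := hB s
  have hL := Lc_pos c
  have hun : (0:ℝ) ≤ ‖u s‖ := norm_nonneg _
  have hWp : (0:ℝ) ≤ Wf C₀ m c s := by
    have : (0:ℝ) ≤ max (Real.log s) 0 := le_max_right _ _
    unfold Wf; positivity
  have hV0 : (0:ℝ) ≤ |Vt j s| := abs_nonneg _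
  have habs : |s| = s := abs_of_nonneg hs
  rw [habs]
  calc s * |Vt j s| * |c j 0 * u s 0 + c j 1 * u s 1|
      ≤ s * (C₀ * (1 + s) ^ (-m)) * (Lc c * (B * Wf C₀ m c s)) := by
        apply mul_le_mul (mul_le_mul_of_nonneg_left h1 hs)
          (h2.trans (mul_le_mul_of_nonneg_left h3 (le_of_lt hL)))
          (abs_nonneg _)
          (mul_nonneg hs (mul_nonneg hC₀ (le_of_lt (Real.rpow_pos_of_pos (by linarith) (-m)))))
    _ = C₀ * Lc c * B * (s * (1 + s) ^ (-m) * Wf C₀ m c s) := by ring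

/-- local bound: `|kf| ≤ M |s|` on `[-1,1]`, where
`M = C₀ * Lc c * B * exp (2 * Htop)`. -/
lemma kf_small (hC₀ : 0 ≤ C₀) (hm : 2 < m)
    (hVtb : ∀ (j : Fin 2) (s : ℝ), 0 ≤ s → |Vt j s| ≤ C₀ * (1 + s) ^ (-m))
    {B : ℝ} (hB : ∀ s : ℝ, ‖u s‖ ≤ B * Wf C₀ m c s) (hB0 : 0 ≤ B)
    (j : Fin 2) {s : ℝ} (hs : |s| ≤ 1) :
    |kf c Vt u j s| ≤ C₀ * Lc c * B * Real.exp (2 * Htop C₀ m c) * |s| := by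
  have hL := Lc_pos c
  rcases le_or_gt s 0 with h | h
  · rw [kf_zero c Vt j h]
    simp only [abs_zero]
    positivity
  · have habs : |s| = s := abs_of_pos h
    have h1 := kf_bound C₀ m c Vt hC₀ hVtb hB j (le_of_lt h)
    have hrp : (1 + s) ^ (-m) ≤ 1 := by
      calc (1 + s) ^ (-m) ≤ (1:ℝ) ^ (-m) :=
            Real.rpow_le_rpow_of_nonpos one_pos (by linarith) (by linarith)
        _ = 1 := Real.one_rpow _
    have hrpn : (0:ℝ) < (1 + s) ^ (-m) := Real.rpow_pos_of_pos (by linarith) _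
    have hW := Wf_le_small C₀ m c hC₀ hm hs
    have hWp := Wf_pos C₀ m c hC₀ s
    have h2 : s * (1 + s) ^ (-m) * Wf C₀ m c s ≤ Real.exp (2 * Htop C₀ m c) * s := by
      calc s * (1 + s) ^ (-m) * Wf C₀ m c s
          ≤ s * 1 * Real.exp (2 * Htop C₀ m c) := by
            apply mul_le_mul (mul_le_mul_of_nonneg_left hrp (le_of_lt h)) hW
              (le_of_lt hWp) (by positivity)
        _ = Real.exp (2 * Htop C₀ m c) * s := by ring
    rw [habs]
    calc |kf c Vt u j s| ≤ C₀ * Lc c * B * (s * (1 + s) ^ (-m) * Wf C₀ m c s) := h1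
      _ ≤ C₀ * Lc c * B * (Real.exp (2 * Htop C₀ m c) * s) := by
          apply mul_le_mul_of_nonneg_left h2 (by positivity)
      _ = C₀ * Lc c * B * Real.exp (2 * Htop C₀ m c) * s := by ring

lemma kflog_continuous (hC₀ : 0 ≤ C₀) (hm : 2 < m)
    (hVtc : ∀ j, Continuous (Vt j))
    (hVtb : ∀ (j : Fin 2) (s : ℝ), 0 ≤ s → |Vt j s| ≤ C₀ * (1 + s) ^ (-m))
    (hu : Continuous u)
    {B : ℝ} (hB : ∀ s : ℝ, ‖u s‖ ≤ B * Wf C₀ m c s) (hB0 : 0 ≤ B) (j : Fin 2) :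
    Continuous (fun s => kf c Vt u j s * Real.log s) := by
  set M : ℝ := C₀ * Lc c * B * Real.exp (2 * Htop C₀ m c) with hM
  have hL := Lc_pos c
  have hM0 : 0 ≤ M := by positivity
  rw [continuous_iff_continuousAt]
  intro s₀
  rcases eq_or_ne s₀ 0 with rfl | hne
  · have hval : kf c Vt u j 0 * Real.log 0 = 0 := by
      rw [kf_zero c Vt j le_rfl]; ring
    rw [ContinuousAt, hval]
    apply squeeze_zero_norm' (a := fun s : ℝ => M * (4 * Real.sqrt |s|))
    · filter_upwards [Metric.ball_mem_nhds (0:ℝ) one_pos] with s hs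
      rw [Metric.mem_ball, Real.dist_eq, sub_zero] at hs
      rcases eq_or_ne s 0 with rfl | hs0
      · rw [kf_zero c Vt j le_rfl]
        simp only [zero_mul, norm_zero]
        positivity
      · have habs : 0 < |s| := abs_pos.2 hs0
        have hsl : |s| * |Real.log s| ≤ 4 * Real.sqrt |s| := by
          rw [← Real.log_abs]
          exact mul_abs_log_le habs (le_of_lt hs)
        have h1 := kf_small C₀ m c Vt hC₀ hm hVtb hB hB0 j (le_of_lt hs)
        rw [Real.norm_eq_abs, abs_mul]
        calc |kf c Vt u j s| * |Real.log s| ≤ M * |s| * |Real.log s| := by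
              apply mul_le_mul_of_nonneg_right h1 (abs_nonneg _)
          _ = M * (|s| * |Real.log s|) := by ring
          _ ≤ M * (4 * Real.sqrt |s|) := mul_le_mul_of_nonneg_left hsl hM0
    · have hcg : Continuous fun s : ℝ => M * (4 * Real.sqrt |s|) := by continuity
      simpa using hcg.tendsto 0
  · exact ((kf_continuous c Vt hVtc hu j).continuousAt).mul (Real.continuousAt_log hne)

lemma Pf_continuous (hVtc : ∀ j, Continuous (Vt j)) (hu : Continuous u) (j : Fin 2) :
    Continuous (Pf c Vt u j) :=
  intervalIntegral.continuous_primitive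
    (fun a b => (kf_continuous c Vt hVtc hu j).intervalIntegrable a b) 0

lemma Pf_hasDerivAt (hVtc : ∀ j, Continuous (Vt j)) (hu : Continuous u) (j : Fin 2) (r : ℝ) :
    HasDerivAt (Pf c Vt u j) (kf c Vt u j r) r :=
  ((kf_continuous c Vt hVtc hu j).integral_hasStrictDerivAt 0 r).hasDerivAt

lemma Pf_zero (j : Fin 2) {r : ℝ} (hr : r ≤ 0) : Pf c Vt u j r = 0 := by
  unfold Pf
  calc ∫ s in (0:ℝ)..r, kf c Vt u j s = ∫ s in (0:ℝ)..r, (0:ℝ) := by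
        apply intervalIntegral.integral_congr
        intro t ht
        rw [uIcc_of_ge hr] at ht
        exact kf_zero c Vt j ht.2
    _ = 0 := by simp

lemma Qf_zero (j : Fin 2) {r : ℝ} (hr : r ≤ 0) : Qf c Vt u j r = 0 := by
  unfold Qf
  calc ∫ s in (0:ℝ)..r, kf c Vt u j s * Real.log s = ∫ s in (0:ℝ)..r, (0:ℝ) := by
        apply intervalIntegral.integral_congr
        intro t ht
        rw [uIcc_of_ge hr] at ht
        show kf c Vt u j t * Real.log t = 0
        rw [kf_zero c Vt j ht.2]; ring
    _ = 0 := by simp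

lemma Pf_small (hC₀ : 0 ≤ C₀) (hm : 2 < m)
    (hVtc : ∀ j, Continuous (Vt j))
    (hVtb : ∀ (j : Fin 2) (s : ℝ), 0 ≤ s → |Vt j s| ≤ C₀ * (1 + s) ^ (-m))
    (hu : Continuous u)
    {B : ℝ} (hB : ∀ s : ℝ, ‖u s‖ ≤ B * Wf C₀ m c s) (hB0 : 0 ≤ B)
    (j : Fin 2) {r : ℝ} (hr : |r| ≤ 1) :
    |Pf c Vt u j r| ≤ C₀ * Lc c * B * Real.exp (2 * Htop C₀ m c) * r ^ 2 := by
  set M : ℝ := C₀ * Lc c * B * Real.exp (2 * Htop C₀ m c) with hM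
  have hxr : ∀ x ∈ Set.uIoc (0:ℝ) r, ‖kf c Vt u j x‖ ≤ M * |r| := by
    intro x hx
    have hxabs : |x| ≤ |r| := by
      rw [Set.mem_uIoc] at hx
      rcases hx with ⟨h1, h2⟩ | ⟨h1, h2⟩
      · rw [abs_of_pos h1]; exact le_trans h2 (le_abs_self r)
      · rw [abs_of_nonpos h2]
        calc -x ≤ -r := by linarith
          _ ≤ |r| := neg_le_abs r
    have := kf_small C₀ m c Vt hC₀ hm hVtb hB hB0 j (le_trans hxabs hr)
    rw [Real.norm_eq_abs]
    refine this.trans ?_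
    have hL := Lc_pos c
    apply mul_le_mul_of_nonneg_left hxabs (by positivity)
  have h1 := intervalIntegral.norm_integral_le_of_norm_le_const hxr
  rw [Real.norm_eq_abs] at h1
  unfold Pf
  exact h1.trans (le_of_eq (by rw [sub_zero, mul_assoc, abs_mul_abs_self, ← pow_two]))

lemma Qf_continuous (hC₀ : 0 ≤ C₀) (hm : 2 < m)
    (hVtc : ∀ j, Continuous (Vt j))
    (hVtb : ∀ (j : Fin 2) (s : ℝ), 0 ≤ s → |Vt j s| ≤ C₀ * (1 + s) ^ (-m))
    (hu : Continuous u)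
    {B : ℝ} (hB : ∀ s : ℝ, ‖u s‖ ≤ B * Wf C₀ m c s) (hB0 : 0 ≤ B) (j : Fin 2) :
    Continuous (Qf c Vt u j) :=
  intervalIntegral.continuous_primitive
    (fun a b => (kflog_continuous C₀ m c Vt hC₀ hm hVtc hVtb hu hB hB0 j).intervalIntegrable a b) 0

lemma Qf_hasDerivAt (hC₀ : 0 ≤ C₀) (hm : 2 < m)
    (hVtc : ∀ j, Continuous (Vt j))
    (hVtb : ∀ (j : Fin 2) (s : ℝ), 0 ≤ s → |Vt j s| ≤ C₀ * (1 + s) ^ (-m))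
    (hu : Continuous u)
    {B : ℝ} (hB : ∀ s : ℝ, ‖u s‖ ≤ B * Wf C₀ m c s) (hB0 : 0 ≤ B) (j : Fin 2) (r : ℝ) :
    HasDerivAt (Qf c Vt u j) (kf c Vt u j r * Real.log r) r :=
  ((kflog_continuous C₀ m c Vt hC₀ hm hVtc hVtb hu hB hB0 j).integral_hasStrictDerivAt 0 r).hasDerivAt

lemma Tf_of_nonpos (a : Fin 2 → ℝ) (j : Fin 2) {r : ℝ} (hr : r ≤ 0) :
    Tf c Vt a u j r = a j := by
  unfold Tf
  rw [Pf_zero c Vt j hr, Qf_zero c Vt j hr]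
  ring

lemma Tf_continuous (hC₀ : 0 ≤ C₀) (hm : 2 < m)
    (hVtc : ∀ j, Continuous (Vt j))
    (hVtb : ∀ (j : Fin 2) (s : ℝ), 0 ≤ s → |Vt j s| ≤ C₀ * (1 + s) ^ (-m))
    (hu : Continuous u)
    {B : ℝ} (hB : ∀ s : ℝ, ‖u s‖ ≤ B * Wf C₀ m c s) (hB0 : 0 ≤ B)
    (a : Fin 2 → ℝ) (j : Fin 2) :
    Continuous (fun r => Tf c Vt a u j r) := by
  unfold Tf
  apply continuous_const.sub
  apply Continuous.sub _ (Qf_continuous C₀ m c Vt hC₀ hm hVtc hVtb hu hB hB0 j)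
  -- continuity of r ↦ log r * Pf r
  set M : ℝ := C₀ * Lc c * B * Real.exp (2 * Htop C₀ m c) with hM
  have hL := Lc_pos c
  have hM0 : 0 ≤ M := by positivity
  have hPc := Pf_continuous c Vt hVtc hu j
  rw [continuous_iff_continuousAt]
  intro r₀
  rcases eq_or_ne r₀ 0 with rfl | hne
  · have hval : Real.log 0 * Pf c Vt u j 0 = 0 := by
      rw [Real.log_zero]; ring
    rw [ContinuousAt, hval]
    apply squeeze_zero_norm' (a := fun r : ℝ => M * (4 * (|r| * Real.sqrt |r|)))
    · filter_upwards [Metric.ball_mem_nhds (0:ℝ) one_pos] with r hballs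
      rw [Metric.mem_ball, Real.dist_eq, sub_zero] at hballs
      rcases eq_or_ne r 0 with rfl | hr0
      · rw [Real.log_zero]
        simp only [zero_mul, norm_zero]
        positivity
      · have habs : 0 < |r| := abs_pos.2 hr0
        have hP := Pf_small C₀ m c Vt hC₀ hm hVtc hVtb hu hB hB0 j (le_of_lt hballs)
        have hlg : |r| * |Real.log r| ≤ 4 * Real.sqrt |r| := by
          rw [← Real.log_abs]
          exact mul_abs_log_le habs (le_of_lt hballs)
        rw [Real.norm_eq_abs, abs_mul]
        calc |Real.log r| * |Pf c Vt u j r| ≤ |Real.log r| * (M * r ^ 2) :=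
              mul_le_mul_of_nonneg_left hP (abs_nonneg _)
          _ = M * (|r| * (|r| * |Real.log r|)) := by
              rw [pow_two, ← abs_mul_abs_self r]; ring
          _ ≤ M * (|r| * (4 * Real.sqrt |r|)) := by
              apply mul_le_mul_of_nonneg_left _ hM0
              exact mul_le_mul_of_nonneg_left hlg (abs_nonneg r)
          _ = M * (4 * (|r| * Real.sqrt |r|)) := by ring
    · have hcg : Continuous fun r : ℝ => M * (4 * (|r| * Real.sqrt |r|)) := by continuity
      simpa using hcg.tendsto 0
  · exact ((Real.continuousAt_log hne).mul hPc.continuousAt)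

/-- The central estimate: for all `r`, `|Tf a u j r - a j| ≤ B/2 · Wf r`. -/
lemma Tf_bound (hC₀ : 0 ≤ C₀) (hm : 2 < m)
    (hVtc : ∀ j, Continuous (Vt j))
    (hVtb : ∀ (j : Fin 2) (s : ℝ), 0 ≤ s → |Vt j s| ≤ C₀ * (1 + s) ^ (-m))
    (hu : Continuous u)
    {B : ℝ} (hB : ∀ s : ℝ, ‖u s‖ ≤ B * Wf C₀ m c s) (hB0 : 0 ≤ B)
    (a : Fin 2 → ℝ) (j : Fin 2) (r : ℝ) :
    |Tf c Vt a u j r - a j| ≤ B / 2 * Wf C₀ m c r := by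
  have hWp := Wf_pos C₀ m c hC₀ r
  rcases le_or_gt r 0 with hr | hr
  · rw [Tf_of_nonpos c Vt a j hr]
    simp only [sub_self, abs_zero]
    positivity
  · unfold Tf
    have hkc := kf_continuous c Vt hVtc hu j
    have hklc := kflog_continuous C₀ m c Vt hC₀ hm hVtc hVtb hu hB hB0 j
    have hPQ : Real.log r * Pf c Vt u j r - Qf c Vt u j r
        = ∫ s in (0:ℝ)..r,
            (Real.log r * kf c Vt u j s - kf c Vt u j s * Real.log s) := by
      rw [intervalIntegral.integral_sub (f := fun s => Real.log r * kf c Vt u j s)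
        ((continuous_const.mul hkc).intervalIntegrable 0 r)
        (hklc.intervalIntegrable 0 r), intervalIntegral.integral_const_mul]
      rfl
    have heasy : a j - (Real.log r * Pf c Vt u j r - Qf c Vt u j r) - a j
        = -(Real.log r * Pf c Vt u j r - Qf c Vt u j r) := by ring
    rw [heasy, abs_neg, hPQ]
    set G : ℝ → ℝ := fun s => Real.log r * kf c Vt u j s - kf c Vt u j s * Real.log s
      with hG
    have hGc : Continuous G := (continuous_const.mul hkc).sub hklc
    set Maj : ℝ → ℝ := fun s =>
      B * (1 + max (Real.log r) 0) * (hh C₀ m c s * Real.exp (2 * HH C₀ m c s)) with hMaj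
    have hHHc := HH_continuous C₀ m c hC₀ hm
    have hMajc : Continuous Maj :=
      continuous_const.mul ((hh_continuous C₀ m c hC₀ (by linarith)).mul
        ((continuous_const.mul hHHc).rexp))
    have hmaj : ∀ s ∈ Icc (0:ℝ) r, |G s| ≤ Maj s := by
      intro s hsmem
      rcases eq_or_lt_of_le hsmem.1 with rfl | hs0
      · rw [hG]
        simp only
        rw [kf_zero c Vt j le_rfl]
        have h1 : (0:ℝ) ≤ 1 + max (Real.log r) 0 := by
          have := le_max_right (Real.log r) (0:ℝ); linarith
        have h2 := hh_nonneg C₀ m c hC₀ (0:ℝ)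
        have h3 := Real.exp_pos (2 * HH C₀ m c 0)
        simp only [mul_zero, zero_mul, sub_zero, abs_zero, hMaj]
        positivity
      · have hsr : s ≤ r := hsmem.2
        have hlogd : 0 ≤ Real.log r - Real.log s := by
          have := Real.log_le_log hs0 hsr; linarith
        have hGfact : |G s| = |kf c Vt u j s| * (Real.log r - Real.log s) := by
          rw [hG]
          simp only
          rw [show Real.log r * kf c Vt u j s - kf c Vt u j s * Real.log s
            = kf c Vt u j s * (Real.log r - Real.log s) by ring]
          rw [abs_mul, abs_of_nonneg hlogd]
        rw [hGfact]
        have hkb := kf_bound C₀ m c Vt hC₀ hVtb hB j (le_of_lt hs0)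
        have hWs : Wf C₀ m c s
            = (1 + max (Real.log s) 0) * Real.exp (2 * HH C₀ m c s) := rfl
        have hXpos : (0:ℝ) ≤ s * (1 + s) ^ (-m) :=
          mul_nonneg (le_of_lt hs0) (le_of_lt (Real.rpow_pos_of_pos (by linarith) _))
        have hEpos : (0:ℝ) < Real.exp (2 * HH C₀ m c s) := Real.exp_pos _
        have hL := Lc_pos c
        have hli := log_ineq hs0 hsr
        calc |kf c Vt u j s| * (Real.log r - Real.log s)
            ≤ C₀ * Lc c * B * (s * (1 + s) ^ (-m) * Wf C₀ m c s)
                * (Real.log r - Real.log s) := by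
              apply mul_le_mul_of_nonneg_right hkb hlogd
          _ = (B * C₀ * Lc c * (s * (1 + s) ^ (-m)) * Real.exp (2 * HH C₀ m c s))
                * ((1 + max (Real.log s) 0) * (Real.log r - Real.log s)) := by
              rw [hWs]; ring
          _ ≤ (B * C₀ * Lc c * (s * (1 + s) ^ (-m)) * Real.exp (2 * HH C₀ m c s))
                * ((1 + max (Real.log r) 0) * (1 + |Real.log s|) ^ 2) := by
              apply mul_le_mul_of_nonneg_left hli (by positivity)
          _ = Maj s := by
              rw [hMaj]
              simp only
              unfold hh
              rw [max_eq_left (le_of_lt hs0)]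
              ring
    have habs : |∫ s in (0:ℝ)..r, G s| ≤ ∫ s in (0:ℝ)..r, |G s| :=
      intervalIntegral.abs_integral_le_integral_abs (le_of_lt hr)
    have hmono : ∫ s in (0:ℝ)..r, |G s| ≤ ∫ s in (0:ℝ)..r, Maj s :=
      intervalIntegral.integral_mono_on (le_of_lt hr)
        (hGc.abs.intervalIntegrable 0 r) (hMajc.intervalIntegrable 0 r) hmaj
    have hfin : ∫ s in (0:ℝ)..r, Maj s
        = B * (1 + max (Real.log r) 0)
            * ∫ s in (0:ℝ)..r, hh C₀ m c s * Real.exp (2 * HH C₀ m c s) := by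
      rw [hMaj, intervalIntegral.integral_const_mul]
    have hbiel := bielecki C₀ m c hC₀ hm (le_of_lt hr)
    have h1r : (0:ℝ) ≤ 1 + max (Real.log r) 0 := by
      have := le_max_right (Real.log r) (0:ℝ); linarith
    calc |∫ s in (0:ℝ)..r, G s| ≤ ∫ s in (0:ℝ)..r, Maj s := le_trans habs hmono
      _ = B * (1 + max (Real.log r) 0)
            * ∫ s in (0:ℝ)..r, hh C₀ m c s * Real.exp (2 * HH C₀ m c s) := hfin
      _ ≤ B * (1 + max (Real.log r) 0) * (Real.exp (2 * HH C₀ m c r) / 2) := by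
          apply mul_le_mul_of_nonneg_left hbiel (by positivity)
      _ = B / 2 * Wf C₀ m c r := by unfold Wf; ring

lemma Pf_sub (hVtc : ∀ j, Continuous (Vt j)) {v : ℝ → Fin 2 → ℝ}
    (hu : Continuous u) (hv : Continuous v) (j : Fin 2) (r : ℝ) :
    Pf c Vt u j r - Pf c Vt v j r = Pf c Vt (u - v) j r := by
  unfold Pf
  rw [← intervalIntegral.integral_sub ((kf_continuous c Vt hVtc hu j).intervalIntegrable 0 r)
    ((kf_continuous c Vt hVtc hv j).intervalIntegrable 0 r)]
  apply intervalIntegral.integral_congr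
  intro t _
  exact kf_sub c Vt v j t

lemma Qf_sub (hVtc : ∀ j, Continuous (Vt j)) {v : ℝ → Fin 2 → ℝ}
    (hu : Continuous u) (hv : Continuous v)
    (hul : Continuous (fun s => kf c Vt u j s * Real.log s))
    (hvl : Continuous (fun s => kf c Vt v j s * Real.log s)) (r : ℝ) :
    Qf c Vt u j r - Qf c Vt v j r = Qf c Vt (u - v) j r := by
  unfold Qf
  rw [← intervalIntegral.integral_sub (hul.intervalIntegrable 0 r)
    (hvl.intervalIntegrable 0 r)]
  apply intervalIntegral.integral_congr
  intro t _
  show kf c Vt u j t * Real.log t - kf c Vt v j t * Real.log t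
    = kf c Vt (u - v) j t * Real.log t
  rw [← kf_sub c Vt v j t]
  ring

end Op

/-! ### The fixed point -/

section Fixed

variable (C₀ m : ℝ) (c : Fin 2 → Fin 2 → ℝ) (Vt : Fin 2 → ℝ → ℝ)

def uOf (x : BoundedContinuousFunction ℝ (Fin 2 → ℝ)) : ℝ → Fin 2 → ℝ :=
  fun s => Wf C₀ m c s • x s

lemma uOf_continuous (hC₀ : 0 ≤ C₀) (hm : 2 < m)
    (x : BoundedContinuousFunction ℝ (Fin 2 → ℝ)) : Continuous (uOf C₀ m c x) :=
  (Wf_continuous C₀ m c hC₀ hm).smul x.continuous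

lemma uOf_bound (hC₀ : 0 ≤ C₀) (x : BoundedContinuousFunction ℝ (Fin 2 → ℝ)) (s : ℝ) :
    ‖uOf C₀ m c x s‖ ≤ ‖x‖ * Wf C₀ m c s := by
  unfold uOf
  rw [norm_smul, Real.norm_eq_abs, abs_of_pos (Wf_pos C₀ m c hC₀ s)]
  have := x.norm_coe_le_norm s
  have hW := Wf_pos C₀ m c hC₀ s
  nlinarith

lemma uOf_sub (x y : BoundedContinuousFunction ℝ (Fin 2 → ℝ)) :
    uOf C₀ m c x - uOf C₀ m c y = uOf C₀ m c (x - y) := by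
  funext s
  unfold uOf
  simp [smul_sub]

def Phi (hC₀ : 0 ≤ C₀) (hm : 2 < m)
    (hVtc : ∀ j, Continuous (Vt j))
    (hVtb : ∀ (j : Fin 2) (s : ℝ), 0 ≤ s → |Vt j s| ≤ C₀ * (1 + s) ^ (-m))
    (a : Fin 2 → ℝ) (x : BoundedContinuousFunction ℝ (Fin 2 → ℝ)) :
    BoundedContinuousFunction ℝ (Fin 2 → ℝ) :=
  BoundedContinuousFunction.ofNormedAddCommGroup
    (fun r => (Wf C₀ m c r)⁻¹ • fun j => Tf c Vt a (uOf C₀ m c x) j r)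
    (by
      apply Continuous.fun_smul
      · exact ((Wf_continuous C₀ m c hC₀ hm).inv₀ (fun r => ne_of_gt (Wf_pos C₀ m c hC₀ r)))
      · exact continuous_pi (fun j => Tf_continuous C₀ m c Vt hC₀ hm hVtc hVtb
          (uOf_continuous C₀ m c hC₀ hm x) (uOf_bound C₀ m c hC₀ x) (norm_nonneg x) a j))
    (‖a‖ + ‖x‖ / 2)
    (by
      intro r
      have hW := Wf_pos C₀ m c hC₀ r
      have hW1 := one_le_Wf C₀ m c hC₀ r
      rw [norm_smul, Real.norm_eq_abs, abs_of_pos (inv_pos.2 hW)]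
      have hcomp : ‖fun j => Tf c Vt a (uOf C₀ m c x) j r‖
          ≤ ‖a‖ + ‖x‖ / 2 * Wf C₀ m c r := by
        apply pi_norm_le_iff_of_nonneg (by positivity) |>.2
        intro j
        have h1 := Tf_bound C₀ m c Vt hC₀ hm hVtc hVtb
          (uOf_continuous C₀ m c hC₀ hm x) (uOf_bound C₀ m c hC₀ x) (norm_nonneg x) a j r
        have h2 : |a j| ≤ ‖a‖ := by simpa using norm_le_pi_norm a j
        rw [Real.norm_eq_abs]
        calc |Tf c Vt a (uOf C₀ m c x) j r|
            ≤ |a j| + |Tf c Vt a (uOf C₀ m c x) j r - a j| := by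
              have := abs_add_le (a j) (Tf c Vt a (uOf C₀ m c x) j r - a j)
              simpa using this
          _ ≤ ‖a‖ + ‖x‖ / 2 * Wf C₀ m c r := add_le_add h2 h1
      calc (Wf C₀ m c r)⁻¹ * ‖fun j => Tf c Vt a (uOf C₀ m c x) j r‖
          ≤ (Wf C₀ m c r)⁻¹ * (‖a‖ + ‖x‖ / 2 * Wf C₀ m c r) := by
            apply mul_le_mul_of_nonneg_left hcomp (le_of_lt (inv_pos.2 hW))
        _ = ‖a‖ * (Wf C₀ m c r)⁻¹ + ‖x‖ / 2 * ((Wf C₀ m c r)⁻¹ * Wf C₀ m c r) := by ring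
        _ ≤ ‖a‖ + ‖x‖ / 2 := by
            rw [inv_mul_cancel₀ (ne_of_gt hW)]
            have hinv : (Wf C₀ m c r)⁻¹ ≤ 1 := by
              rw [inv_le_one_iff₀]; right; exact hW1
            nlinarith [norm_nonneg a])

lemma Phi_contracting (hC₀ : 0 ≤ C₀) (hm : 2 < m)
    (hVtc : ∀ j, Continuous (Vt j))
    (hVtb : ∀ (j : Fin 2) (s : ℝ), 0 ≤ s → |Vt j s| ≤ C₀ * (1 + s) ^ (-m))
    (a : Fin 2 → ℝ) :
    ContractingWith (1/2 : NNReal) (Phi C₀ m c Vt hC₀ hm hVtc hVtb a) := by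
  constructor
  · rw [← NNReal.coe_lt_coe]; norm_num
  · rw [lipschitzWith_iff_dist_le_mul]
    intro x y
    have hd0 : (0:ℝ) ≤ (1/2 : NNReal) * dist x y := by positivity
    apply BoundedContinuousFunction.dist_le hd0 |>.2
    intro r
    have hW := Wf_pos C₀ m c hC₀ r
    rw [dist_eq_norm]
    have hcoe : (Phi C₀ m c Vt hC₀ hm hVtc hVtb a x) r
        - (Phi C₀ m c Vt hC₀ hm hVtc hVtb a y) r
        = (Wf C₀ m c r)⁻¹ • ((fun j => Tf c Vt a (uOf C₀ m c x) j r)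
            - fun j => Tf c Vt a (uOf C₀ m c y) j r) := by
      simp only [Phi, BoundedContinuousFunction.coe_ofNormedAddCommGroup]
      rw [smul_sub]
    rw [hcoe, norm_smul, Real.norm_eq_abs, abs_of_pos (inv_pos.2 hW)]
    have hux := uOf_continuous C₀ m c hC₀ hm x
    have huy := uOf_continuous C₀ m c hC₀ hm y
    have huxy : Continuous (uOf C₀ m c (x - y)) := uOf_continuous C₀ m c hC₀ hm (x - y)
    have hBxy : ∀ s : ℝ, ‖uOf C₀ m c (x - y) s‖ ≤ ‖x - y‖ * Wf C₀ m c s :=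
      uOf_bound C₀ m c hC₀ (x - y)
    have hdiff : ∀ j, Tf c Vt a (uOf C₀ m c x) j r - Tf c Vt a (uOf C₀ m c y) j r
        = Tf c Vt (fun _ => 0) (uOf C₀ m c (x - y)) j r := by
      intro j
      unfold Tf
      rw [← uOf_sub C₀ m c x y,
        ← Pf_sub c Vt hVtc hux huy j r,
        ← Qf_sub c Vt hVtc hux huy
          (kflog_continuous C₀ m c Vt hC₀ hm hVtc hVtb hux (uOf_bound C₀ m c hC₀ x)
            (norm_nonneg x) j)
          (kflog_continuous C₀ m c Vt hC₀ hm hVtc hVtb huy (uOf_bound C₀ m c hC₀ y)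
            (norm_nonneg y) j) r]
      ring
    have hnorm : ‖(fun j => Tf c Vt a (uOf C₀ m c x) j r)
        - fun j => Tf c Vt a (uOf C₀ m c y) j r‖ ≤ ‖x - y‖ / 2 * Wf C₀ m c r := by
      apply pi_norm_le_iff_of_nonneg (by positivity) |>.2
      intro j
      rw [Pi.sub_apply, Real.norm_eq_abs, hdiff j]
      have h1 := Tf_bound C₀ m c Vt hC₀ hm hVtc hVtb huxy hBxy (norm_nonneg (x - y))
        (fun _ => 0) j r
      simpa using h1
    calc (Wf C₀ m c r)⁻¹ * ‖(fun j => Tf c Vt a (uOf C₀ m c x) j r)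
          - fun j => Tf c Vt a (uOf C₀ m c y) j r‖
        ≤ (Wf C₀ m c r)⁻¹ * (‖x - y‖ / 2 * Wf C₀ m c r) := by
          apply mul_le_mul_of_nonneg_left hnorm (le_of_lt (inv_pos.2 hW))
      _ = ‖x - y‖ / 2 * ((Wf C₀ m c r)⁻¹ * Wf C₀ m c r) := by ring
      _ = (1/2 : NNReal) * dist x y := by
          rw [inv_mul_cancel₀ (ne_of_gt hW), dist_eq_norm]
          push_cast
          ring

end Fixed

/-- Auxiliary: the log comparison for the final growth bound. -/
lemma logmax_le_log {r : ℝ} (hr : 0 ≤ r) :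
    1 + max (Real.log r) 0 ≤ (1 / Real.log 2 + 1) * Real.log (2 + r) := by
  have hl2 : 0 < Real.log 2 := Real.log_pos one_lt_two
  have hlr : Real.log 2 ≤ Real.log (2 + r) := Real.log_le_log two_pos (by linarith)
  have h1 : 1 ≤ 1 / Real.log 2 * Real.log (2 + r) := by
    rw [div_mul_eq_mul_div, le_div_iff₀ hl2]; linarith
  have h2 : max (Real.log r) 0 ≤ Real.log (2 + r) := by
    apply max_le _ (by linarith)
    rcases eq_or_lt_of_le hr with rfl | hr0
    · rw [Real.log_zero]; linarith
    · exact Real.log_le_log hr0 (by linarith)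
  nlinarith

section Key

variable (C₀ m : ℝ) (c : Fin 2 → Fin 2 → ℝ) (Vt : Fin 2 → ℝ → ℝ)

theorem key (hC₀ : 0 ≤ C₀) (hm : 2 < m)
    (hVtc : ∀ j, Continuous (Vt j))
    (hVtb : ∀ (j : Fin 2) (s : ℝ), 0 ≤ s → |Vt j s| ≤ C₀ * (1 + s) ^ (-m))
    (a : Fin 2 → ℝ) :
    ∃ w : Fin 2 → ℝ → ℝ,
      (∀ j, Continuous (w j)) ∧
      (∀ j, ContDiffOn ℝ 2 (w j) (Set.Ioi 0)) ∧
      (∀ (j : Fin 2) (r : ℝ), 0 < r →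
        deriv (deriv (w j)) r + deriv (w j) r / r
          + (c j 0 * w 0 r + c j 1 * w 1 r) * Vt j r = 0) ∧
      (∀ j, w j 0 = a j) ∧
      (∃ C > (0:ℝ), ∀ (j : Fin 2) (r : ℝ), 0 ≤ r → |w j r| ≤ C * Real.log (2 + r)) := by
  have hcontr := Phi_contracting C₀ m c Vt hC₀ hm hVtc hVtb a
  set x : BoundedContinuousFunction ℝ (Fin 2 → ℝ) :=
    ContractingWith.fixedPoint (Phi C₀ m c Vt hC₀ hm hVtc hVtb a) hcontr with hxdef
  have hfix : Phi C₀ m c Vt hC₀ hm hVtc hVtb a x = x :=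
    hcontr.fixedPoint_isFixedPt
  set u : ℝ → Fin 2 → ℝ := uOf C₀ m c x with hudef
  have hu : Continuous u := uOf_continuous C₀ m c hC₀ hm x
  have hB : ∀ s : ℝ, ‖u s‖ ≤ ‖x‖ * Wf C₀ m c s := uOf_bound C₀ m c hC₀ x
  have hB0 : (0:ℝ) ≤ ‖x‖ := norm_nonneg x
  have hfe : ∀ (j : Fin 2) (r : ℝ), u r j = Tf c Vt a u j r := by
    intro j r
    have h1 : (Phi C₀ m c Vt hC₀ hm hVtc hVtb a x) r = x r := by rw [hfix]
    have h2 : (Wf C₀ m c r)⁻¹ • (fun j => Tf c Vt a u j r) = x r := by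
      rw [← h1]
      simp only [Phi, BoundedContinuousFunction.coe_ofNormedAddCommGroup]
      rfl
    have hW := Wf_pos C₀ m c hC₀ r
    have h3 : x r j = (Wf C₀ m c r)⁻¹ * Tf c Vt a u j r := by
      rw [← h2]; rfl
    show Wf C₀ m c r * x r j = _
    rw [h3]
    field_simp
  have hP : ∀ (j : Fin 2) (r : ℝ), HasDerivAt (Pf c Vt u j) (kf c Vt u j r) r :=
    Pf_hasDerivAt c Vt hVtc hu
  have hQ : ∀ (j : Fin 2) (r : ℝ),
      HasDerivAt (Qf c Vt u j) (kf c Vt u j r * Real.log r) r :=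
    fun j r => Qf_hasDerivAt C₀ m c Vt hC₀ hm hVtc hVtb hu hB hB0 j r
  have hwfun : ∀ j : Fin 2, (fun r => u r j)
      = fun r => a j - (Real.log r * Pf c Vt u j r - Qf c Vt u j r) :=
    fun j => funext fun r => hfe j r
  have hd1 : ∀ (j : Fin 2) (r : ℝ), 0 < r →
      HasDerivAt (fun r => u r j) (-(Pf c Vt u j r) / r) r := by
    intro j r hr
    rw [hwfun j]
    have hlog := Real.hasDerivAt_log (ne_of_gt hr)
    have h := (hasDerivAt_const r (a j)).sub (((hlog.mul (hP j r))).sub (hQ j r))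
    refine h.congr_deriv ?_
    ring
  have hderiv1 : ∀ j : Fin 2,
      Set.EqOn (deriv (fun r => u r j)) (fun r => -(Pf c Vt u j r) / r) (Ioi 0) :=
    fun j r hr => (hd1 j r hr).deriv
  have hd2 : ∀ (j : Fin 2) (r : ℝ), 0 < r →
      HasDerivAt (fun r => -(Pf c Vt u j r) / r)
        (-(kf c Vt u j r) / r + Pf c Vt u j r / r ^ 2) r := by
    intro j r hr
    have h := ((hP j r).neg).div (hasDerivAt_id r) (ne_of_gt hr)
    refine h.congr_deriv ?_
    show (-(kf c Vt u j r) * r - -(Pf c Vt u j r) * 1) / r ^ 2 = _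
    field_simp
    ring
  refine ⟨fun j r => u r j, ?_, ?_, ?_, ?_, ?_⟩
  · intro j; exact (continuous_apply j).comp hu
  · intro j
    have hPc1 : ContDiff ℝ 1 (Pf c Vt u j) := by
      rw [contDiff_one_iff_deriv]
      constructor
      · exact fun r => (hP j r).differentiableAt
      · have hde : deriv (Pf c Vt u j) = kf c Vt u j := funext fun r => (hP j r).deriv
        rw [hde]
        exact kf_continuous c Vt hVtc hu j
    have hwd : ContDiffOn ℝ 1 (fun r => -(Pf c Vt u j r) / r) (Ioi 0) := by
      apply ContDiffOn.div (hPc1.contDiffOn.neg) contDiffOn_id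
      exact fun r hr => ne_of_gt hr
    rw [show (2 : WithTop ℕ∞) = 1 + 1 by norm_num]
    rw [contDiffOn_succ_iff_deriv_of_isOpen isOpen_Ioi]
    refine ⟨fun r hr => ((hd1 j r hr).differentiableAt.differentiableWithinAt), ?_, ?_⟩
    · intro hω
      exact absurd hω (by simp)
    · exact hwd.congr (hderiv1 j)
  · intro j r hr
    have h2 : deriv (deriv (fun r => u r j)) r
        = -(kf c Vt u j r) / r + Pf c Vt u j r / r ^ 2 := by
      have hev : deriv (fun r => u r j) =ᶠ[nhds r] (fun r => -(Pf c Vt u j r) / r) :=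
        Filter.eventuallyEq_of_mem (isOpen_Ioi.mem_nhds hr) (hderiv1 j)
      rw [hev.deriv_eq]
      exact (hd2 j r hr).deriv
    have h1 : deriv (fun r => u r j) r = -(Pf c Vt u j r) / r := (hd1 j r hr).deriv
    rw [h2, h1]
    have hk : kf c Vt u j r = r * Vt j r * (c j 0 * u r 0 + c j 1 * u r 1) := by
      unfold kf
      rw [max_eq_left (le_of_lt hr)]
    rw [hk]
    field_simp
    ring
  · intro j
    show u 0 j = a j
    rw [hfe j 0, Tf_of_nonpos c Vt a j le_rfl]
  · refine ⟨(‖x‖ + 1) * Real.exp (2 * Htop C₀ m c) * (1 / Real.log 2 + 1), ?_, ?_⟩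
    · have hl2 : 0 < Real.log 2 := Real.log_pos one_lt_two
      positivity
    · intro j r hr
      have h1 : |u r j| ≤ ‖u r‖ := by simpa using norm_le_pi_norm (u r) j
      have h2 := hB r
      have h3 := Wf_le C₀ m c hC₀ hm r
      have h4 := logmax_le_log hr
      have h5 : 0 < Real.exp (2 * Htop C₀ m c) := Real.exp_pos _
      have hlog : 0 ≤ Real.log (2 + r) := Real.log_nonneg (by linarith)
      have hl2 : 0 < Real.log 2 := Real.log_pos one_lt_two
      have hmax : (0:ℝ) ≤ max (Real.log r) 0 := le_max_right _ _
      calc |u r j| ≤ ‖x‖ * Wf C₀ m c r := h1.trans h2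
        _ ≤ ‖x‖ * ((1 + max (Real.log r) 0) * Real.exp (2 * Htop C₀ m c)) :=
            mul_le_mul_of_nonneg_left h3 hB0
        _ = (‖x‖ * Real.exp (2 * Htop C₀ m c)) * (1 + max (Real.log r) 0) := by ring
        _ ≤ (‖x‖ * Real.exp (2 * Htop C₀ m c))
              * ((1 / Real.log 2 + 1) * Real.log (2 + r)) := by
            apply mul_le_mul_of_nonneg_left h4 (by positivity)
        _ = (‖x‖ * Real.exp (2 * Htop C₀ m c) * (1 / Real.log 2 + 1)) * Real.log (2 + r) := by
            ring
        _ ≤ ((‖x‖ + 1) * Real.exp (2 * Htop C₀ m c) * (1 / Real.log 2 + 1))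
              * Real.log (2 + r) := by
            apply mul_le_mul_of_nonneg_right _ hlog
            have hx1 : ‖x‖ ≤ ‖x‖ + 1 := by linarith
            have hpos : (0:ℝ) < 1 / Real.log 2 + 1 := by positivity
            nlinarith

end Key

end

end S10

/-- Log-growth fundamental solutions of the mode-zero radial linearized system:
for potentials `V_l` decaying like `(1+r)^{-m}` with `m > 2` and any coefficient
matrix `c`, the ODE system `wⱼ'' + wⱼ'/r + (c_{j1}w₁ + c_{j2}w₂)Vⱼ = 0` admits
two linearly independent solution pairs, continuous up to `r = 0`, growing at
most logarithmically. -/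
theorem stmt_10 (m C₀ : ℝ) (hm : 2 < m) (hC₀ : 0 < C₀)
    (V : Fin 2 → ℝ → ℝ) (hVc : ∀ l, ContinuousOn (V l) (Set.Ici 0))
    (hVb : ∀ (l : Fin 2) (r : ℝ), 0 ≤ r → |V l r| ≤ C₀ * (1 + r) ^ (-m))
    (c : Fin 2 → Fin 2 → ℝ) :
    ∃ w₁ w₂ : Fin 2 → ℝ → ℝ,
      (∀ j : Fin 2, ContinuousOn (w₁ j) (Set.Ici 0) ∧
        ContinuousOn (w₂ j) (Set.Ici 0)) ∧
      (∀ j : Fin 2, ContDiffOn ℝ 2 (w₁ j) (Set.Ioi 0) ∧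
        ContDiffOn ℝ 2 (w₂ j) (Set.Ioi 0)) ∧
      (∀ (j : Fin 2) (r : ℝ), 0 < r →
        deriv (deriv (w₁ j)) r + deriv (w₁ j) r / r
          + (c j 0 * w₁ 0 r + c j 1 * w₁ 1 r) * V j r = 0) ∧
      (∀ (j : Fin 2) (r : ℝ), 0 < r →
        deriv (deriv (w₂ j)) r + deriv (w₂ j) r / r
          + (c j 0 * w₂ 0 r + c j 1 * w₂ 1 r) * V j r = 0) ∧
      (∃ C > (0:ℝ), ∀ (j : Fin 2) (r : ℝ), 0 ≤ r →
        |w₁ j r| ≤ C * Real.log (2 + r) ∧ |w₂ j r| ≤ C * Real.log (2 + r)) ∧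
      (∀ a₁ a₂ : ℝ,
        (∀ (j : Fin 2) (r : ℝ), 0 ≤ r → a₁ * w₁ j r + a₂ * w₂ j r = 0) →
        a₁ = 0 ∧ a₂ = 0) := by
  classical
  set Vt : Fin 2 → ℝ → ℝ := fun j s => V j (max s 0) with hVt
  have hVtc : ∀ j, Continuous (Vt j) := by
    intro j
    apply (hVc j).comp_continuous (continuous_id.max continuous_const)
    intro s
    exact Set.mem_Ici.2 (le_max_right s 0)
  have hVtb : ∀ (j : Fin 2) (s : ℝ), 0 ≤ s → |Vt j s| ≤ C₀ * (1 + s) ^ (-m) := by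
    intro j s hs
    have hmx : max s 0 = s := max_eq_left hs
    show |V j (max s 0)| ≤ _
    rw [hmx]
    exact hVb j s hs
  have hVteq : ∀ (j : Fin 2) (r : ℝ), 0 ≤ r → Vt j r = V j r := by
    intro j r hr
    show V j (max r 0) = V j r
    rw [max_eq_left hr]
  obtain ⟨w₁, hc1, hs1, ho1, hv1, C₁, hC₁, hb1⟩ :=
    S10.key C₀ m c Vt (le_of_lt hC₀) hm hVtc hVtb (fun j => if j = 0 then 1 else 0)
  obtain ⟨w₂, hc2, hs2, ho2, hv2, C₂, hC₂, hb2⟩ :=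
    S10.key C₀ m c Vt (le_of_lt hC₀) hm hVtc hVtb (fun j => if j = 1 then 1 else 0)
  refine ⟨w₁, w₂, ?_, ?_, ?_, ?_, ?_, ?_⟩
  · exact fun j => ⟨(hc1 j).continuousOn, (hc2 j).continuousOn⟩
  · exact fun j => ⟨hs1 j, hs2 j⟩
  · intro j r hr
    have := ho1 j r hr
    rwa [hVteq j r (le_of_lt hr)] at this
  · intro j r hr
    have := ho2 j r hr
    rwa [hVteq j r (le_of_lt hr)] at this
  · refine ⟨max C₁ C₂, lt_max_of_lt_left hC₁, ?_⟩
    intro j r hr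
    have hlog : 0 ≤ Real.log (2 + r) := Real.log_nonneg (by linarith)
    constructor
    · exact (hb1 j r hr).trans (mul_le_mul_of_nonneg_right (le_max_left _ _) hlog)
    · exact (hb2 j r hr).trans (mul_le_mul_of_nonneg_right (le_max_right _ _) hlog)
  · intro a₁ a₂ hzero
    constructor
    · have h0 := hzero 0 0 le_rfl
      rw [hv1 0, hv2 0] at h0
      simpa using h0
    · have h1 := hzero 1 0 le_rfl
      rw [hv1 1, hv2 1] at h1
      simpa using h1
end
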